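/- arXiv:2405.04754 — 8 statements merged into one kernel-verified Lean document; each statement's English description precedes it below -/
import Mathlib

section
/- Let d be a natural number and let σ : Fin d → ℝ be nonnegative real numbers. Set N = ∑_i σ_i, T₁ = ∑_i σ_i² and T₂ = ∑_i σ_i⁴. Then T₂ ≥ T₁² − (1/2)·(N² − T₁)², and consequently N² ≥ √(2·(T₁² − T₂)) + T₁. -/
open Finset

/-- Square of a sum equals sum of squares plus twice the "strictly lower triangular"
off-diagonal sum. -/
lemma sq_sum_eq_aux (d : ℕ) (f : Fin d → ℝ) :
    (∑ i, f i) ^ 2 = (∑ i, f i ^ 2)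
      + 2 * ∑ p ∈ (univ : Finset (Fin d)).offDiag with p.1 < p.2, f p.1 * f p.2 := by
  have h0 : (∑ i, f i) ^ 2 = ∑ p ∈ (univ ×ˢ univ : Finset (Fin d × Fin d)), f p.1 * f p.2 := by
    rw [sq, Finset.sum_mul_sum, Finset.sum_product]
  rw [h0, ← Finset.diag_union_offDiag, Finset.sum_union (Finset.disjoint_diag_offDiag _),
    Finset.sum_diag]
  congr 1
  · exact Finset.sum_congr rfl fun i _ => (sq (f i)).symm
  · -- split offDiag into < and >
    have hsplit := Finset.sum_filter_add_sum_filter_not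
      ((univ : Finset (Fin d)).offDiag) (fun p => p.1 < p.2) (fun p => f p.1 * f p.2)
    have hgt : ∑ p ∈ (univ : Finset (Fin d)).offDiag with ¬ p.1 < p.2, f p.1 * f p.2
        = ∑ p ∈ (univ : Finset (Fin d)).offDiag with p.1 < p.2, f p.1 * f p.2 := by
      refine Finset.sum_nbij' Prod.swap Prod.swap ?_ ?_ ?_ ?_ ?_
      · intro p hp
        simp only [Finset.mem_filter, Finset.mem_offDiag, Finset.mem_univ, true_and] at hp ⊢
        have : p.2 ≠ p.1 := fun h => hp.1 h.symm
        exact ⟨this, lt_of_le_of_ne (not_lt.mp hp.2) hp.1.symm⟩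
      · intro p hp
        simp only [Finset.mem_filter, Finset.mem_offDiag, Finset.mem_univ, true_and] at hp ⊢
        exact ⟨fun h => hp.1 h.symm, not_lt.mpr (le_of_lt hp.2)⟩
      · intro p _; rfl
      · intro p _; rfl
      · intro p _; exact mul_comm _ _
    rw [← hsplit, hgt]; ring

/-- Key inequality of Theorem 1: for nonnegative reals `σ i`, with
`N = ∑ σ i`, `T₁ = ∑ (σ i)^2`, `T₂ = ∑ (σ i)^4`, one has
`T₂ ≥ T₁² − (1/2)·(N² − T₁)²` and `N² ≥ √(2·(T₁² − T₂)) + T₁`. -/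
theorem moments_key_inequality (d : ℕ) (σ : Fin d → ℝ) (hσ : ∀ i, 0 ≤ σ i) :
    (∑ i, σ i ^ 4) ≥ (∑ i, σ i ^ 2) ^ 2
        - (1 / 2) * ((∑ i, σ i) ^ 2 - ∑ i, σ i ^ 2) ^ 2 ∧
    (∑ i, σ i) ^ 2 ≥
      Real.sqrt (2 * ((∑ i, σ i ^ 2) ^ 2 - ∑ i, σ i ^ 4)) + ∑ i, σ i ^ 2 := by
  set s := (univ : Finset (Fin d)).offDiag.filter (fun p => p.1 < p.2) with hs
  set A := ∑ p ∈ s, σ p.1 * σ p.2 with hA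
  set B := ∑ p ∈ s, (σ p.1 * σ p.2) ^ 2 with hB
  have h1 : (∑ i, σ i) ^ 2 = (∑ i, σ i ^ 2) + 2 * A := sq_sum_eq_aux d σ
  have h2 : (∑ i, σ i ^ 2) ^ 2 = (∑ i, σ i ^ 4) + 2 * B := by
    have := sq_sum_eq_aux d (fun i => σ i ^ 2)
    rw [this]
    congr 1
    · exact Finset.sum_congr rfl fun i _ => by ring
    · rw [hB]; congr 1; exact Finset.sum_congr rfl fun p _ => by ring
  have hBA : B ≤ A ^ 2 :=
    Finset.sum_sq_le_sq_sum_of_nonneg fun p _ => mul_nonneg (hσ _) (hσ _)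
  have hAnn : 0 ≤ A := Finset.sum_nonneg fun p _ => mul_nonneg (hσ _) (hσ _)
  have hfirst : (∑ i, σ i ^ 4) ≥ (∑ i, σ i ^ 2) ^ 2
      - (1 / 2) * ((∑ i, σ i) ^ 2 - ∑ i, σ i ^ 2) ^ 2 := by
    rw [h1, h2]; nlinarith
  refine ⟨hfirst, ?_⟩
  have hsq : 2 * ((∑ i, σ i ^ 2) ^ 2 - ∑ i, σ i ^ 4) ≤ (2 * A) ^ 2 := by
    rw [h2]; nlinarith
  have := Real.sqrt_le_sqrt hsq
  calc Real.sqrt (2 * ((∑ i, σ i ^ 2) ^ 2 - ∑ i, σ i ^ 4)) + ∑ i, σ i ^ 2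
      ≤ Real.sqrt ((2 * A) ^ 2) + ∑ i, σ i ^ 2 := by linarith
    _ = 2 * A + ∑ i, σ i ^ 2 := by
        rw [Real.sqrt_sq (by linarith)]
    _ = (∑ i, σ i) ^ 2 := by rw [h1]; ring
end

section
/- Let A be an arbitrary square complex matrix. Set T₁ = Tr(A†A) and T₂ = Tr((A†A)²) (both are nonnegative real numbers). Then the trace norm of A satisfies ‖A‖ ≥ √( √(2·(T₁² − T₂)) + T₁ ), i.e. ‖A‖² ≥ √(2·(T₁² − T₂)) + T₁. -/
open ComplexOrder Matrix

theorem trace_pow_herm' {m : Type*} [Fintype m] [DecidableEq m] {B : Matrix m m ℂ}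
    (hB : B.IsHermitian) (k : ℕ) :
    (B ^ k).trace = ∑ i, (hB.eigenvalues i : ℂ) ^ k := by
  set U : Matrix m m ℂ := (hB.eigenvectorUnitary : Matrix m m ℂ) with hUdef
  set D : Matrix m m ℂ := diagonal (RCLike.ofReal ∘ hB.eigenvalues) with hDdef
  have hU : star U * U = 1 := (Matrix.mem_unitaryGroup_iff').mp (hB.eigenvectorUnitary).2
  have hU' : U * star U = 1 := (Matrix.mem_unitaryGroup_iff).mp (hB.eigenvectorUnitary).2
  conv_lhs => rw [hB.spectral_theorem, Unitary.conjStarAlgAut_apply]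
  have key : ∀ j : ℕ, (U * D * star U) ^ j = U * D ^ j * star U := by
    intro j
    induction j with
    | zero => rw [pow_zero, pow_zero, Matrix.mul_one, hU']
    | succ j ih =>
      rw [pow_succ, ih, pow_succ]
      simp only [Matrix.mul_assoc]
      rw [← Matrix.mul_assoc (star U) U, hU, Matrix.one_mul]
  rw [key, Matrix.trace_mul_cycle, hU, Matrix.one_mul, hDdef, diagonal_pow, trace_diagonal]
  simp

theorem real_key' {n : ℕ} (l : Fin n → ℝ) (hl : ∀ i, 0 ≤ l i) :
    Real.sqrt (2 * ((∑ i, l i ^ 2) ^ 2 - ∑ i, l i ^ 4)) + ∑ i, l i ^ 2 ≤ (∑ i, l i) ^ 2 := by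
  set s := (Finset.univ : Finset (Fin n)).offDiag with hs
  set g : Fin n × Fin n → ℝ := fun p => l p.1 * l p.2 with hg
  have hsplit : ∀ f : Fin n → ℝ, (∑ i, f i) ^ 2 = ∑ i, f i ^ 2 + ∑ p ∈ s, f p.1 * f p.2 := by
    intro f
    rw [sq, Finset.sum_mul_sum, ← Finset.sum_product', ← Finset.diag_union_offDiag,
      Finset.sum_union (Finset.disjoint_diag_offDiag _), Finset.sum_diag]
    simp [sq, hs]
  have h1 := hsplit l
  have h2 := hsplit (fun i => l i ^ 2)
  have h2' : (∑ i, l i ^ 2) ^ 2 = ∑ i, l i ^ 4 + ∑ p ∈ s, g p ^ 2 := by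
    rw [h2]; congr 1
    · exact Finset.sum_congr rfl fun i _ => by ring
    · exact Finset.sum_congr rfl fun p _ => by simp [hg]; ring
  have hgnn : ∀ p, 0 ≤ g p := fun p => mul_nonneg (hl _) (hl _)
  have hP : 0 ≤ ∑ p ∈ s, g p := Finset.sum_nonneg fun p _ => hgnn p
  have hkey : 2 * ∑ p ∈ s, g p ^ 2 ≤ (∑ p ∈ s, g p) ^ 2 := by
    rw [sq, Finset.sum_mul_sum, Finset.mul_sum]
    refine Finset.sum_le_sum fun p hp => ?_
    have hpne : p ≠ p.swap := by
      intro h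
      exact (Finset.mem_offDiag.mp hp).2.2 (congrArg Prod.fst h)
    have hswap : p.swap ∈ s := by
      have := Finset.mem_offDiag.mp hp
      exact Finset.mem_offDiag.mpr ⟨Finset.mem_univ _, Finset.mem_univ _, Ne.symm this.2.2⟩
    have hsub : ({p, p.swap} : Finset (Fin n × Fin n)) ⊆ s := by
      intro q hq
      rcases Finset.mem_insert.mp hq with h | h
      · exact h ▸ hp
      · exact (Finset.mem_singleton.mp h) ▸ hswap
    calc 2 * g p ^ 2 = ∑ q ∈ ({p, p.swap} : Finset (Fin n × Fin n)), g p * g q := by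
          rw [Finset.sum_pair hpne]
          have : g p.swap = g p := by simp [hg, mul_comm]
          rw [this]; ring
      _ ≤ ∑ q ∈ s, g p * g q :=
          Finset.sum_le_sum_of_subset_of_nonneg hsub fun q _ _ => mul_nonneg (hgnn p) (hgnn q)
  have hsq : Real.sqrt (2 * ((∑ i, l i ^ 2) ^ 2 - ∑ i, l i ^ 4)) ≤ ∑ p ∈ s, g p := by
    have : 2 * ((∑ i, l i ^ 2) ^ 2 - ∑ i, l i ^ 4) = 2 * ∑ p ∈ s, g p ^ 2 := by
      rw [h2']; ring
    rw [this]
    calc Real.sqrt (2 * ∑ p ∈ s, g p ^ 2) ≤ Real.sqrt ((∑ p ∈ s, g p) ^ 2) :=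
          Real.sqrt_le_sqrt hkey
      _ = ∑ p ∈ s, g p := Real.sqrt_sq hP
  rw [h1]
  linarith

/-- The trace norm of a complex matrix `A`: the trace of the positive
semidefinite square root of `Aᴴ * A` (equivalently, the sum of the
singular values of `A`). -/
noncomputable def traceNorm {n : ℕ} (A : Matrix (Fin n) (Fin n) ℂ) : ℝ :=
  (((Matrix.posSemidef_conjTranspose_mul_self A).1.eigenvectorUnitary.1 *
      diagonal (((↑) : ℝ → ℂ) ∘ (Real.sqrt ·) ∘ (Matrix.posSemidef_conjTranspose_mul_self A).1.eigenvalues) *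
      (star (Matrix.posSemidef_conjTranspose_mul_self A).1.eigenvectorUnitary : Matrix (Fin n) (Fin n) ℂ)).trace).re

/-- For any square complex matrix `A`, with `T₁ = Tr(AᴴA)` and
`T₂ = Tr((AᴴA)²)`, the trace norm satisfies
`‖A‖ ≥ √(√(2(T₁² − T₂)) + T₁)`, i.e. `‖A‖² ≥ √(2(T₁² − T₂)) + T₁`. -/
theorem traceNorm_ge_moment_bound (n : ℕ) (A : Matrix (Fin n) (Fin n) ℂ) :
    traceNorm A ≥
      Real.sqrt (Real.sqrt (2 * (((Aᴴ * A).trace.re) ^ 2 - ((Aᴴ * A) ^ 2).trace.re))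
        + (Aᴴ * A).trace.re) ∧
    traceNorm A ^ 2 ≥
      Real.sqrt (2 * (((Aᴴ * A).trace.re) ^ 2 - ((Aᴴ * A) ^ 2).trace.re))
        + (Aᴴ * A).trace.re := by
  set hpsd := Matrix.posSemidef_conjTranspose_mul_self A with hpsddef
  have hherm : (Aᴴ * A).IsHermitian := hpsd.1
  set e := hherm.eigenvalues with hedef
  have he : ∀ i, 0 ≤ e i := hpsd.eigenvalues_nonneg
  set l : Fin n → ℝ := fun i => Real.sqrt (e i) with hldef
  have hl : ∀ i, 0 ≤ l i := fun i => Real.sqrt_nonneg _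
  have hle : ∀ i, l i ^ 2 = e i := fun i => Real.sq_sqrt (he i)
  have htn : traceNorm A = ∑ i, l i := by
    rw [traceNorm, Matrix.trace_mul_cycle,
      (Matrix.mem_unitaryGroup_iff').mp hherm.eigenvectorUnitary.2, Matrix.one_mul, trace_diagonal]
    simp [l, e, hherm]
  have hT1 : (Aᴴ * A).trace.re = ∑ i, l i ^ 2 := by
    have := trace_pow_herm' hherm 1
    rw [pow_one] at this
    rw [this]
    simp [hle, e]
  have hT2 : ((Aᴴ * A) ^ 2).trace.re = ∑ i, l i ^ 4 := by
    rw [trace_pow_herm' hherm 2]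
    simp only [← Complex.ofReal_pow, ← Complex.ofReal_sum, Complex.ofReal_re]
    exact Finset.sum_congr rfl fun i _ => by show e i ^ 2 = _; rw [← hle i]; ring
  have key := real_key' l hl
  rw [htn, hT1, hT2]
  constructor
  · have h0 : 0 ≤ ∑ i, l i := Finset.sum_nonneg fun i _ => hl i
    calc Real.sqrt (Real.sqrt (2 * ((∑ i, l i ^ 2) ^ 2 - ∑ i, l i ^ 4)) + ∑ i, l i ^ 2)
        ≤ Real.sqrt ((∑ i, l i) ^ 2) := Real.sqrt_le_sqrt key
      _ = ∑ i, l i := Real.sqrt_sq h0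
  · exact key
end

section
/- Theorem 1: Let ρ be a separable bipartite quantum state on ℂ^m ⊗ ℂ^n. Let T^R₁ = Tr((ρ^R)†ρ^R) and T^R₂ = Tr(((ρ^R)†ρ^R)²) be its first two realignment moments. Then Q := √( √(2·((T^R₁)² − T^R₂)) + T^R₁ ) ≤ 1. -/
open ComplexOrder Matrix Kronecker Finset



open Finset

lemma sq_sum_eq_add_offDiag {ι : Type*} [Fintype ι] [DecidableEq ι] (f : ι → ℝ) :
    (∑ i, f i) ^ 2 = (∑ i, f i ^ 2) + ∑ p ∈ Finset.univ.offDiag, f p.1 * f p.2 := by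
  rw [sq, Finset.sum_mul_sum]
  rw [← Finset.sum_product', ← Finset.diag_union_offDiag (Finset.univ : Finset ι),
    Finset.sum_union (Finset.disjoint_diag_offDiag _)]
  congr 1
  · refine Finset.sum_nbij' (fun p => p.1) (fun i => (i, i)) ?_ ?_ ?_ ?_ ?_ <;>
      simp +contextual [Finset.mem_diag, sq, Prod.ext_iff]

lemma two_sum_sq_le {ι : Type*} [Fintype ι] [DecidableEq ι] (σ : ι → ℝ) (hσ : ∀ i, 0 ≤ σ i) :
    2 * ((∑ i, σ i ^ 2) ^ 2 - ∑ i, (σ i ^ 2) ^ 2) ≤ ((∑ i, σ i) ^ 2 - ∑ i, σ i ^ 2) ^ 2 := by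
  have h1 := sq_sum_eq_add_offDiag (fun i => σ i ^ 2)
  have h2 := sq_sum_eq_add_offDiag σ
  set D := (Finset.univ : Finset ι).offDiag with hD
  have hg : ∀ p : ι × ι, 0 ≤ σ p.1 * σ p.2 := fun p => mul_nonneg (hσ _) (hσ _)
  have hkey : 2 * ∑ p ∈ D, (σ p.1 * σ p.2) ^ 2 ≤ (∑ p ∈ D, σ p.1 * σ p.2) ^ 2 := by
    have hswap : ∀ p ∈ D, (σ p.1 * σ p.2) * (σ p.1 * σ p.2) + (σ p.1 * σ p.2) * (σ p.2 * σ p.1)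
        ≤ (σ p.1 * σ p.2) * ∑ q ∈ D, σ q.1 * σ q.2 := by
      intro p hp
      have hpD : p.1 ≠ p.2 := (Finset.mem_offDiag.1 hp).2.2
      have hmem : Prod.swap p ∈ D := by
        simp only [hD, Finset.mem_offDiag] at hp ⊢
        exact ⟨hp.2.1, hp.1, hpD.symm⟩
      have hne : p ≠ Prod.swap p := by
        intro h
        exact hpD (by rw [Prod.ext_iff] at h; exact h.1.trans rfl)
      have hsub : ({p, Prod.swap p} : Finset (ι × ι)) ⊆ D := by
        intro q hq; rcases Finset.mem_insert.1 hq with h | h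
        · exact h ▸ hp
        · exact (Finset.mem_singleton.1 h) ▸ hmem
      have : (σ p.1 * σ p.2) + (σ p.2 * σ p.1) ≤ ∑ q ∈ D, σ q.1 * σ q.2 := by
        calc (σ p.1 * σ p.2) + (σ p.2 * σ p.1)
            = ∑ q ∈ ({p, Prod.swap p} : Finset (ι × ι)), σ q.1 * σ q.2 := by
              rw [Finset.sum_pair hne]; simp [Prod.swap]
          _ ≤ ∑ q ∈ D, σ q.1 * σ q.2 :=
              Finset.sum_le_sum_of_subset_of_nonneg hsub (fun q _ _ => hg q)
      calc (σ p.1 * σ p.2) * (σ p.1 * σ p.2) + (σ p.1 * σ p.2) * (σ p.2 * σ p.1)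
          = (σ p.1 * σ p.2) * ((σ p.1 * σ p.2) + (σ p.2 * σ p.1)) := by ring
        _ ≤ _ := mul_le_mul_of_nonneg_left this (hg p)
    calc 2 * ∑ p ∈ D, (σ p.1 * σ p.2) ^ 2
        = ∑ p ∈ D, ((σ p.1 * σ p.2) * (σ p.1 * σ p.2) + (σ p.1 * σ p.2) * (σ p.2 * σ p.1)) := by
          rw [Finset.mul_sum]
          exact Finset.sum_congr rfl fun p _ => by ring
      _ ≤ ∑ p ∈ D, (σ p.1 * σ p.2) * ∑ q ∈ D, σ q.1 * σ q.2 := Finset.sum_le_sum hswap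
      _ = (∑ p ∈ D, σ p.1 * σ p.2) ^ 2 := by rw [← Finset.sum_mul]; ring
  have e1 : (∑ i, σ i ^ 2) ^ 2 - ∑ i, (σ i ^ 2) ^ 2 = ∑ p ∈ D, (σ p.1 * σ p.2) ^ 2 := by
    rw [h1, Finset.sum_congr rfl (fun p _ => by ring : ∀ p ∈ D, σ p.1 ^2 * σ p.2 ^2 = (σ p.1 * σ p.2)^2)]; ring
  have e2 : (∑ i, σ i) ^ 2 - ∑ i, σ i ^ 2 = ∑ p ∈ D, σ p.1 * σ p.2 := by rw [h2]; ring
  rw [e1, e2]; exact hkey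





lemma trace_eq_sum_eigen {ι : Type*} [Fintype ι] [DecidableEq ι]
    {A : Matrix ι ι ℂ} (hA : A.IsHermitian) :
    A.trace = ∑ i, (hA.eigenvalues i : ℂ) := by
  conv_lhs => rw [hA.spectral_theorem, Unitary.conjStarAlgAut_apply]
  rw [Matrix.trace_mul_cycle, Unitary.coe_star_mul_self, Matrix.one_mul, Matrix.trace_diagonal]
  exact Finset.sum_congr rfl fun i _ => rfl

lemma trace_sq_eq_sum_eigen {ι : Type*} [Fintype ι] [DecidableEq ι]
    {A : Matrix ι ι ℂ} (hA : A.IsHermitian) :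
    (A * A).trace = ∑ i, (hA.eigenvalues i : ℂ) ^ 2 := by
  set U : Matrix ι ι ℂ := (hA.eigenvectorUnitary : Matrix ι ι ℂ) with hUdef
  set D : Matrix ι ι ℂ := diagonal (RCLike.ofReal ∘ hA.eigenvalues) with hDdef
  have hU : star U * U = 1 := Unitary.coe_star_mul_self _
  have hU' : ∀ X : Matrix ι ι ℂ, star U * (U * X) = X := fun X => by
    rw [← Matrix.mul_assoc, hU, Matrix.one_mul]
  conv_lhs => rw [hA.spectral_theorem, Unitary.conjStarAlgAut_apply]
  simp only [← hUdef, ← hDdef, Matrix.mul_assoc]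
  rw [hU', Matrix.trace_mul_comm]
  simp only [Matrix.mul_assoc]
  rw [hU, Matrix.mul_one, hDdef, Matrix.diagonal_mul_diagonal, Matrix.trace_diagonal]
  exact Finset.sum_congr rfl fun i _ => (sq ((hA.eigenvalues i : ℂ))).symm

lemma complex_norm_sq_eq_re (z : ℂ) : ‖z‖ ^ 2 = (star z * z).re := by
  rw [Complex.sq_norm, Complex.star_def, ← Complex.normSq_eq_conj_mul_self,
    Complex.ofReal_re]

lemma frobenius_le_one {ι : Type*} [Fintype ι] [DecidableEq ι]
    {A : Matrix ι ι ℂ} (hA : A.PosSemidef) (ht : A.trace = 1) :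
    ∑ i, ∑ j, ‖A i j‖ ^ 2 ≤ 1 := by
  have h1 : ∑ i, ∑ j, ‖A i j‖ ^ 2 = ((Aᴴ * A).trace).re := by
    rw [Matrix.trace, Complex.re_sum, Finset.sum_comm]
    refine Finset.sum_congr rfl fun i _ => ?_
    rw [Matrix.diag_apply, Matrix.mul_apply, Complex.re_sum]
    refine Finset.sum_congr rfl fun j _ => ?_
    rw [Matrix.conjTranspose_apply, complex_norm_sq_eq_re]
  have h2 : Aᴴ = A := hA.1
  rw [h1, h2, trace_sq_eq_sum_eigen hA.1]
  have h3 : ∑ i, hA.1.eigenvalues i = 1 := by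
    have := congrArg Complex.re (trace_eq_sum_eigen hA.1)
    rw [ht] at this
    simpa [Complex.re_sum] using this.symm
  have h4 : (∑ i, ((hA.1.eigenvalues i : ℂ)) ^ 2).re = ∑ i, hA.1.eigenvalues i ^ 2 := by
    rw [Complex.re_sum]
    refine Finset.sum_congr rfl fun i _ => ?_
    rw [← Complex.ofReal_pow, Complex.ofReal_re]
  rw [h4]
  calc ∑ i, hA.1.eigenvalues i ^ 2 ≤ (∑ i, hA.1.eigenvalues i) ^ 2 :=
        Finset.sum_sq_le_sq_sum_of_nonneg (fun i _ => hA.eigenvalues_nonneg i)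
    _ = 1 := by rw [h3]; norm_num





variable {α β : Type*} [Fintype α] [Fintype β] [DecidableEq α] [DecidableEq β]

lemma sum_sqrt_eigen_le (M : Matrix α β ℂ) {ι : Type*} [Fintype ι]
    (c : ι → ℝ) (X : ι → α → ℂ) (Y : ι → β → ℂ)
    (hc : ∀ t, 0 ≤ c t) (hc1 : ∑ t, c t = 1)
    (hX : ∀ t, ∑ p, ‖X t p‖ ^ 2 ≤ 1) (hY : ∀ t, ∑ q, ‖Y t q‖ ^ 2 ≤ 1)
    (hM : ∀ p q, M p q = ∑ t, (c t : ℂ) * (X t p * Y t q)) :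
    ∑ i, Real.sqrt ((Matrix.isHermitian_conjTranspose_mul_self M).eigenvalues i) ≤ 1 := by
  set hherm := Matrix.isHermitian_conjTranspose_mul_self M with hhermdef
  have hG : (Mᴴ * M).PosSemidef := Matrix.posSemidef_conjTranspose_mul_self M
  set lam : β → ℝ := hherm.eigenvalues with hlam
  have hlam0 : ∀ i, 0 ≤ lam i := fun i => hG.eigenvalues_nonneg i
  set b := hherm.eigenvectorBasis with hb
  set v : β → β → ℂ := fun i => ⇑(b i) with hv
  -- F1
  have F1 : ∀ i j, star (M *ᵥ v i) ⬝ᵥ (M *ᵥ v j) = (lam j : ℂ) * (star (v i) ⬝ᵥ v j) := by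
    intro i j
    have h := hherm.mulVec_eigenvectorBasis j
    calc star (M *ᵥ v i) ⬝ᵥ (M *ᵥ v j)
        = (star (v i) ᵥ* Mᴴ) ⬝ᵥ (M *ᵥ v j) := by rw [Matrix.star_mulVec]
      _ = ((star (v i) ᵥ* Mᴴ) ᵥ* M) ⬝ᵥ v j := by rw [Matrix.dotProduct_mulVec]
      _ = (star (v i) ᵥ* (Mᴴ * M)) ⬝ᵥ v j := by rw [Matrix.vecMul_vecMul]
      _ = star (v i) ⬝ᵥ ((Mᴴ * M) *ᵥ v j) := by rw [Matrix.dotProduct_mulVec]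
      _ = star (v i) ⬝ᵥ (lam j • v j) := by rw [show (Mᴴ * M) *ᵥ v j = lam j • v j from h]
      _ = (lam j : ℂ) * (star (v i) ⬝ᵥ v j) := by
          rw [dotProduct_smul]
          rw [Complex.real_smul]
  -- F2
  have F2 : ∀ i j, star (v i) ⬝ᵥ v j = if i = j then 1 else 0 := by
    intro i j
    have horth := b.orthonormal
    rw [orthonormal_iff_ite] at horth
    have := horth i j
    rw [EuclideanSpace.inner_eq_star_dotProduct, dotProduct_comm] at this
    exact this
  -- singular values and left singular vectors
  set S : Finset β := Finset.univ.filter (fun i => lam i ≠ 0) with hS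
  set sig : β → ℝ := fun i => Real.sqrt (lam i) with hsig
  set u : β → α → ℂ := fun i => ((sig i : ℂ))⁻¹ • (M *ᵥ v i) with hu
  have hsig_sq : ∀ i, sig i ^ 2 = lam i := fun i => Real.sq_sqrt (hlam0 i)
  have hsig_nonneg : ∀ i, 0 ≤ sig i := fun i => Real.sqrt_nonneg _
  have hsig_pos : ∀ i ∈ S, 0 < sig i := by
    intro i hi
    rw [hS, Finset.mem_filter] at hi
    exact Real.sqrt_pos.2 (lt_of_le_of_ne (hlam0 i) (Ne.symm hi.2))
  -- F3 : dot products of the u's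
  have F3 : ∀ i j, star (u i) ⬝ᵥ u j
      = ((sig i : ℂ))⁻¹ * (((sig j : ℂ))⁻¹ * ((lam j : ℂ) * (if i = j then 1 else 0))) := by
    intro i j
    show star (((sig i : ℂ))⁻¹ • (M *ᵥ v i)) ⬝ᵥ (((sig j : ℂ))⁻¹ • (M *ᵥ v j)) = _
    rw [star_smul, smul_dotProduct, dotProduct_smul, F1 i j, F2 i j,
      star_inv₀, Complex.star_def, Complex.conj_ofReal, smul_eq_mul, smul_eq_mul]
  -- orthonormality of the u's over S
  have hu_orth : Orthonormal ℂ (fun i : {x // x ∈ S} => WithLp.toLp 2 (u i)) := by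
    rw [orthonormal_iff_ite]
    intro i j
    rw [EuclideanSpace.inner_eq_star_dotProduct, dotProduct_comm]
    have h3 := F3 (i : β) (j : β)
    by_cases h : i = j
    · subst h
      rw [if_pos rfl]
      show star (u (i:β)) ⬝ᵥ u (i:β) = 1
      rw [F3, if_pos rfl, mul_one]
      have hpos := hsig_pos _ i.2
      have : (lam (i:β) : ℂ) = (sig (i:β) : ℂ) * (sig (i:β) : ℂ) := by
        rw [← Complex.ofReal_mul, ← sq, hsig_sq]
      rw [this]
      have hne : (sig (i:β) : ℂ) ≠ 0 := by
        simpa using hpos.ne'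
      field_simp
    · have hne : (i : β) ≠ (j : β) := fun hh => h (Subtype.ext hh)
      simp only [if_neg hne, mul_zero, if_neg h] at h3 ⊢
      exact h3
  -- F6 : diagonal values give the singular values
  have F6 : ∀ i ∈ S, star (u i) ⬝ᵥ (M *ᵥ v i) = (sig i : ℂ) := by
    intro i hi
    show star (((sig i : ℂ))⁻¹ • (M *ᵥ v i)) ⬝ᵥ (M *ᵥ v i) = _
    rw [star_smul, smul_dotProduct, F1 i i, F2 i i, if_pos rfl, mul_one,
      star_inv₀, Complex.star_def, Complex.conj_ofReal, smul_eq_mul]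
    have hpos := hsig_pos _ hi
    have hlam_eq : (lam i : ℂ) = (sig i : ℂ) * (sig i : ℂ) := by
      rw [← Complex.ofReal_mul, ← sq, hsig_sq]
    rw [hlam_eq]
    have hne : (sig i : ℂ) ≠ 0 := by simpa using hpos.ne'
    field_simp
  -- F5 : expansion of the matrix as sum of rank-one terms
  have F5 : ∀ (z : α → ℂ) (w : β → ℂ),
      star z ⬝ᵥ (M *ᵥ w) = ∑ t, (c t : ℂ) * ((star z ⬝ᵥ X t) * (Y t ⬝ᵥ w)) := by
    intro z w
    have hMv : ∀ p, (M *ᵥ w) p = ∑ t, (c t : ℂ) * (X t p * (Y t ⬝ᵥ w)) := by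
      intro p
      simp only [Matrix.mulVec, dotProduct, hM, Finset.sum_mul, Finset.mul_sum]
      rw [Finset.sum_comm]
      exact Finset.sum_congr rfl fun t _ => Finset.sum_congr rfl fun q _ => by ring
    rw [dotProduct]
    rw [Finset.sum_congr rfl fun p (_ : p ∈ Finset.univ) => by rw [hMv p, Finset.mul_sum]]
    rw [Finset.sum_comm]
    refine Finset.sum_congr rfl fun t _ => ?_
    rw [show star z ⬝ᵥ X t = ∑ p, star z p * X t p from rfl, Finset.sum_mul, Finset.mul_sum]
    exact Finset.sum_congr rfl fun p _ => by simp only [Pi.star_apply]; ring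
  -- Bessel bound for the X side
  have hXsum : ∀ t, ∑ i ∈ S, ‖star (u i) ⬝ᵥ X t‖ ^ 2 ≤ 1 := by
    intro t
    have hb' := Orthonormal.sum_inner_products_le (WithLp.toLp 2 (X t))
      (s := Finset.univ) hu_orth
    have hinner : ∀ i : {x // x ∈ S},
        (inner ℂ (WithLp.toLp 2 (u i)) (WithLp.toLp 2 (X t)) : ℂ)
          = star (u (i:β)) ⬝ᵥ X t := fun i =>
      (EuclideanSpace.inner_eq_star_dotProduct _ _).trans (dotProduct_comm _ _)
    calc ∑ i ∈ S, ‖star (u i) ⬝ᵥ X t‖ ^ 2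
        = ∑ i : {x // x ∈ S}, ‖star (u (i:β)) ⬝ᵥ X t‖ ^ 2 :=
          (Finset.sum_coe_sort S _).symm
      _ ≤ ‖WithLp.toLp 2 (X t)‖ ^ 2 := by
          refine le_trans (le_of_eq ?_) hb'
          exact Finset.sum_congr rfl fun i _ => by rw [hinner]
      _ = ∑ p, ‖X t p‖ ^ 2 := by
          rw [EuclideanSpace.norm_eq, Real.sq_sqrt (by positivity)]
      _ ≤ 1 := hX t
  -- Parseval bound for the Y side
  have hYsum : ∀ t, ∑ i ∈ S, ‖Y t ⬝ᵥ v i‖ ^ 2 ≤ 1 := by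
    intro t
    set w : EuclideanSpace ℂ β := WithLp.toLp 2 (fun q => star (Y t q)) with hw
    have hinner : ∀ i, (inner ℂ w (b i) : ℂ) = Y t ⬝ᵥ v i := by
      intro i
      rw [EuclideanSpace.inner_eq_star_dotProduct]
      show v i ⬝ᵥ star (fun q => star (Y t q)) = Y t ⬝ᵥ v i
      rw [dotProduct_comm]
      simp [dotProduct]
    have hpar : ∑ i, ‖(inner ℂ w (b i) : ℂ)‖ ^ 2 = ‖w‖ ^ 2 := by
      have h := b.sum_inner_mul_inner w w
      have h2 : ∀ i, (inner ℂ w (b i) : ℂ) * (inner ℂ (b i) w : ℂ)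
          = ((‖(inner ℂ w (b i) : ℂ)‖ ^ 2 : ℝ) : ℂ) := by
        intro i
        rw [← inner_conj_symm (b i) w, Complex.mul_conj']
        norm_cast
      rw [Finset.sum_congr rfl fun i _ => h2 i] at h
      have h3 := congrArg Complex.re h
      rw [Complex.re_sum] at h3
      have h4 : (inner ℂ w w : ℂ).re = ‖w‖ ^ 2 := by
        rw [inner_self_eq_norm_sq_to_K]
        norm_cast
      rw [h4] at h3
      rw [← h3]
      exact Finset.sum_congr rfl fun i _ => by rw [Complex.ofReal_re]
    calc ∑ i ∈ S, ‖Y t ⬝ᵥ v i‖ ^ 2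
        ≤ ∑ i, ‖Y t ⬝ᵥ v i‖ ^ 2 :=
          Finset.sum_le_sum_of_subset_of_nonneg (Finset.subset_univ S)
            (fun i _ _ => by positivity)
      _ = ‖w‖ ^ 2 := by
          rw [← hpar]
          exact Finset.sum_congr rfl fun i _ => by rw [hinner]
      _ = ∑ q, ‖Y t q‖ ^ 2 := by
          rw [EuclideanSpace.norm_eq, Real.sq_sqrt (by positivity)]
          simp [hw]
      _ ≤ 1 := hY t
  -- main chain
  have step1 : ∑ i, sig i = ∑ i ∈ S, sig i := by
    symm
    apply Finset.sum_subset (Finset.subset_univ S)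
    intro i _ hi
    rw [hS, Finset.mem_filter] at hi
    have h0 : lam i = 0 := by
      by_contra hne
      exact hi ⟨Finset.mem_univ i, hne⟩
    show Real.sqrt (lam i) = 0
    rw [h0, Real.sqrt_zero]
  show ∑ i, sig i ≤ 1
  calc ∑ i, sig i = ∑ i ∈ S, sig i := step1
    _ = (∑ i ∈ S, star (u i) ⬝ᵥ (M *ᵥ v i)).re := by
        rw [Complex.re_sum]
        exact (Finset.sum_congr rfl fun i hi => by rw [F6 i hi, Complex.ofReal_re]).symm
    _ = (∑ t, (c t : ℂ) * ∑ i ∈ S, (star (u i) ⬝ᵥ X t) * (Y t ⬝ᵥ v i)).re := by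
        congr 1
        rw [Finset.sum_congr rfl fun i (hi : i ∈ S) => F5 (u i) (v i)]
        rw [Finset.sum_comm]
        exact Finset.sum_congr rfl fun t _ => (Finset.mul_sum _ _ _).symm
    _ ≤ ∑ t, c t * (Real.sqrt (∑ i ∈ S, ‖star (u i) ⬝ᵥ X t‖ ^ 2)
          * Real.sqrt (∑ i ∈ S, ‖Y t ⬝ᵥ v i‖ ^ 2)) := by
        rw [Complex.re_sum]
        refine Finset.sum_le_sum fun t _ => ?_
        rw [Complex.re_ofReal_mul]
        refine mul_le_mul_of_nonneg_left ?_ (hc t)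
        calc (∑ i ∈ S, (star (u i) ⬝ᵥ X t) * (Y t ⬝ᵥ v i)).re
            ≤ ‖∑ i ∈ S, (star (u i) ⬝ᵥ X t) * (Y t ⬝ᵥ v i)‖ := by
              exact Complex.re_le_norm _
          _ ≤ ∑ i ∈ S, ‖(star (u i) ⬝ᵥ X t) * (Y t ⬝ᵥ v i)‖ := norm_sum_le _ _
          _ = ∑ i ∈ S, ‖star (u i) ⬝ᵥ X t‖ * ‖Y t ⬝ᵥ v i‖ :=
              Finset.sum_congr rfl fun i _ => norm_mul _ _
          _ ≤ Real.sqrt (∑ i ∈ S, ‖star (u i) ⬝ᵥ X t‖ ^ 2)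
              * Real.sqrt (∑ i ∈ S, ‖Y t ⬝ᵥ v i‖ ^ 2) :=
              Real.sum_mul_le_sqrt_mul_sqrt _ _ _
    _ ≤ ∑ t, c t * 1 := by
        refine Finset.sum_le_sum fun t _ => ?_
        refine mul_le_mul_of_nonneg_left ?_ (hc t)
        have hx1 := Real.sqrt_le_one.2 (hXsum t)
        have hy1 := Real.sqrt_le_one.2 (hYsum t)
        calc Real.sqrt (∑ i ∈ S, ‖star (u i) ⬝ᵥ X t‖ ^ 2)
              * Real.sqrt (∑ i ∈ S, ‖Y t ⬝ᵥ v i‖ ^ 2)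
            ≤ 1 * 1 := mul_le_mul hx1 hy1 (Real.sqrt_nonneg _) zero_le_one
          _ = 1 := one_mul 1
    _ = 1 := by
        rw [Finset.sum_congr rfl fun t _ => mul_one (c t)]
        exact hc1


/-- A bipartite quantum state `ρ` on `ℂ^m ⊗ ℂ^n` is separable if it is a finite
convex combination of Kronecker products of states of the subsystems. -/
def IsSeparableState {m n : ℕ} (ρ : Matrix (Fin m × Fin n) (Fin m × Fin n) ℂ) : Prop :=
  ∃ (s : ℕ) (p : Fin s → ℝ) (A : Fin s → Matrix (Fin m) (Fin m) ℂ)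
    (B : Fin s → Matrix (Fin n) (Fin n) ℂ),
    (∀ i, 0 ≤ p i) ∧ (∑ i, p i = 1) ∧
    (∀ i, (A i).PosSemidef ∧ (A i).trace = 1) ∧
    (∀ i, (B i).PosSemidef ∧ (B i).trace = 1) ∧
    ρ = ∑ i, (p i : ℂ) • (A i ⊗ₖ B i)

/-- The realignment `ρ^R` of a bipartite matrix:
`(ρ^R)_{(i,j),(k,l)} = ρ_{(i,k),(j,l)}`. -/
def realign {m n : ℕ} (ρ : Matrix (Fin m × Fin n) (Fin m × Fin n) ℂ) :
    Matrix (Fin m × Fin m) (Fin n × Fin n) ℂ :=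
  fun p q => ρ (p.1, q.1) (p.2, q.2)

/-- Theorem 1: for a separable bipartite state `ρ`, with realignment moments
`T₁ = Tr((ρ^R)†ρ^R)` and `T₂ = Tr(((ρ^R)†ρ^R)²)`, one has
`Q = √(√(2(T₁² − T₂)) + T₁) ≤ 1`. -/
theorem separable_realignment_moment_criterion (m n : ℕ)
    (ρ : Matrix (Fin m × Fin n) (Fin m × Fin n) ℂ)
    (hρ : ρ.PosSemidef) (htr : ρ.trace = 1) (hsep : IsSeparableState ρ) :
    Real.sqrt (Real.sqrt (2 * ((((realign ρ)ᴴ * realign ρ).trace.re) ^ 2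
        - (((realign ρ)ᴴ * realign ρ) ^ 2).trace.re))
      + ((realign ρ)ᴴ * realign ρ).trace.re) ≤ 1 := by
  obtain ⟨s, p, A, B, hp, hp1, hA, hB, hρeq⟩ := hsep
  set M : Matrix (Fin m × Fin m) (Fin n × Fin n) ℂ := realign ρ with hMdef
  set X : Fin s → (Fin m × Fin m) → ℂ := fun t pr => A t pr.1 pr.2 with hX
  set Y : Fin s → (Fin n × Fin n) → ℂ := fun t qr => B t qr.1 qr.2 with hY
  have hM : ∀ pr qr, M pr qr = ∑ t, (p t : ℂ) * (X t pr * Y t qr) := by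
    intro pr qr
    show realign ρ pr qr = _
    rw [realign, hρeq]
    simp only [Matrix.sum_apply, Matrix.smul_apply, Matrix.kroneckerMap_apply, smul_eq_mul]
    rfl
  have hXb : ∀ t, ∑ pr, ‖X t pr‖ ^ 2 ≤ 1 := by
    intro t
    rw [Fintype.sum_prod_type]
    exact frobenius_le_one (hA t).1 (hA t).2
  have hYb : ∀ t, ∑ qr, ‖Y t qr‖ ^ 2 ≤ 1 := by
    intro t
    rw [Fintype.sum_prod_type]
    exact frobenius_le_one (hB t).1 (hB t).2
  have hsum := sum_sqrt_eigen_le M p X Y hp hp1 hXb hYb hM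
  set hherm := Matrix.isHermitian_conjTranspose_mul_self M with hhermdef
  set lam : (Fin n × Fin n) → ℝ := hherm.eigenvalues with hlam
  have hlam0 : ∀ i, 0 ≤ lam i :=
    fun i => (Matrix.posSemidef_conjTranspose_mul_self M).eigenvalues_nonneg i
  have hT1 : ((Mᴴ * M).trace).re = ∑ i, lam i := by
    rw [trace_eq_sum_eigen hherm, Complex.re_sum]
    exact Finset.sum_congr rfl fun i _ => Complex.ofReal_re _
  have hT2 : (((Mᴴ * M) ^ 2).trace).re = ∑ i, lam i ^ 2 := by
    rw [pow_two, trace_sq_eq_sum_eigen hherm, Complex.re_sum]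
    refine Finset.sum_congr rfl fun i _ => ?_
    rw [← Complex.ofReal_pow, Complex.ofReal_re]
  rw [hT1, hT2]
  set sig : (Fin n × Fin n) → ℝ := fun i => Real.sqrt (lam i) with hsig
  have hsig0 : ∀ i, 0 ≤ sig i := fun i => Real.sqrt_nonneg _
  have hlameq : ∀ i, lam i = sig i ^ 2 := fun i => (Real.sq_sqrt (hlam0 i)).symm
  have hs1 : ∑ i, sig i ≤ 1 := hsum
  have hrw1 : ∑ i, lam i = ∑ i, sig i ^ 2 := Finset.sum_congr rfl fun i _ => hlameq i
  have hrw2 : ∑ i, lam i ^ 2 = ∑ i, (sig i ^ 2) ^ 2 :=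
    Finset.sum_congr rfl fun i _ => by rw [hlameq i]
  rw [hrw1, hrw2]
  have hkey := two_sum_sq_le sig hsig0
  have hnn : 0 ≤ (∑ i, sig i) ^ 2 - ∑ i, sig i ^ 2 := by
    have := Finset.sum_sq_le_sq_sum_of_nonneg (s := Finset.univ) (f := sig)
      (fun i _ => hsig0 i)
    linarith
  have h5 : Real.sqrt (2 * ((∑ i, sig i ^ 2) ^ 2 - ∑ i, (sig i ^ 2) ^ 2))
      ≤ (∑ i, sig i) ^ 2 - ∑ i, sig i ^ 2 := by
    calc Real.sqrt (2 * ((∑ i, sig i ^ 2) ^ 2 - ∑ i, (sig i ^ 2) ^ 2))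
        ≤ Real.sqrt (((∑ i, sig i) ^ 2 - ∑ i, sig i ^ 2) ^ 2) := Real.sqrt_le_sqrt hkey
      _ = (∑ i, sig i) ^ 2 - ∑ i, sig i ^ 2 := Real.sqrt_sq hnn
  have hsq1 : (∑ i, sig i) ^ 2 ≤ 1 :=
    pow_le_one₀ (Finset.sum_nonneg fun i _ => hsig0 i) hs1
  refine Real.sqrt_le_one.2 ?_
  linarith
end

section
/- Theorem 2: Let ρ be a separable bipartite quantum state on ℂ^m ⊗ ℂ^n, let ρ^τ be its partial transpose (which is Hermitian since ρ is Hermitian), let q be the rank of ρ^τ, and for k = 0,1,…,mn let a_k denote the k-th elementary symmetric polynomial of the (real) eigenvalues of ρ^τ, with a₀ = 1. Then a_k · a_{k+1} > 0 for every k = 0,1,…,q−1; moreover a_q ≠ 0 and a_r = 0 for every r > q. -/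
open ComplexOrder Matrix Kronecker

/-- The partial transpose `ρ^τ` (with respect to the second subsystem):
`(ρ^τ)_{(i,j),(k,l)} = ρ_{(i,l),(k,j)}`. -/
def ptrans {m n : ℕ} (ρ : Matrix (Fin m × Fin n) (Fin m × Fin n) ℂ) :
    Matrix (Fin m × Fin n) (Fin m × Fin n) ℂ :=
  fun p q => ρ (p.1, q.2) (q.1, p.2)

/-- Kronecker product of PSD matrices is PSD. -/
lemma posSemidef_kron {l l' : Type*} [Fintype l] [Fintype l'] [DecidableEq l] [DecidableEq l']
    {A : Matrix l l ℂ} {B : Matrix l' l' ℂ} (hA : A.PosSemidef) (hB : B.PosSemidef) :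
    (A ⊗ₖ B).PosSemidef := by
  exact hA.kronecker hB

/-- Nonnegative real scalar multiple of a PSD complex matrix is PSD. -/
lemma posSemidef_real_smul {l : Type*} [Fintype l] {M : Matrix l l ℂ} (hM : M.PosSemidef)
    {c : ℝ} (hc : 0 ≤ c) : ((c : ℂ) • M).PosSemidef := by
  refine .of_dotProduct_mulVec_nonneg ?_ ?_
  · have : (c : ℂ) • M = Matrix.of fun i j => (c : ℂ) * M i j := rfl
    unfold Matrix.IsHermitian
    rw [conjTranspose_smul, hM.1.eq]
    simp
  · intro x
    have h0 := hM.dotProduct_mulVec_nonneg x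
    have : dotProduct (star x) (((c : ℂ) • M) *ᵥ x)
        = (c : ℂ) * dotProduct (star x) (M *ᵥ x) := by
      rw [smul_mulVec, dotProduct_smul, smul_eq_mul]
    rw [this]
    rw [Complex.nonneg_iff] at h0 ⊢
    constructor
    · simp only [Complex.mul_re, Complex.ofReal_re, Complex.ofReal_im, zero_mul, sub_zero]
      exact mul_nonneg hc h0.1
    · simp [Complex.mul_im, ← h0.2]

lemma ptrans_posSemidef {m n : ℕ} {ρ : Matrix (Fin m × Fin n) (Fin m × Fin n) ℂ}
    (hsep : IsSeparableState ρ) : (ptrans ρ).PosSemidef := by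
  obtain ⟨s, p, A, B, hp, -, hA, hB, hρ⟩ := hsep
  have key : ptrans ρ = ∑ i, (p i : ℂ) • (A i ⊗ₖ (B i)ᵀ) := by
    ext ⟨i, j⟩ ⟨k, l⟩
    simp only [ptrans, hρ, Finset.sum_apply, Matrix.sum_apply, Matrix.smul_apply,
      kroneckerMap_apply, transpose_apply, smul_eq_mul]
  rw [key]
  apply Finset.sum_induction _ _ (fun _ _ => Matrix.PosSemidef.add) Matrix.PosSemidef.zero
  intro i _
  exact posSemidef_real_smul (posSemidef_kron (hA i).1 (hB i).1.transpose) (hp i)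

/-- In a multiset, a sub-multiset of any card up to the total card exists. -/
lemma Multiset.exists_le_card_eq {α : Type*} {s : Multiset α} {k : ℕ} (h : k ≤ Multiset.card s) :
    ∃ t ≤ s, Multiset.card t = k := by
  refine ⟨(s.toList.take k : List α), ?_, ?_⟩
  · have h1 : ((s.toList.take k : List α) : Multiset α) ≤ (s.toList : Multiset α) :=
      (List.take_sublist k s.toList).subperm
    simpa [Multiset.coe_toList] using h1
  · rw [Multiset.coe_card, List.length_take]
    rw [← Multiset.length_toList] at h
    omega

lemma esymm_pos {s : Multiset ℝ} (hs : ∀ x ∈ s, 0 ≤ x) {k : ℕ}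
    (hk : k ≤ Multiset.card (s.filter (· ≠ 0))) : 0 < s.esymm k := by
  obtain ⟨t, ht, htc⟩ := Multiset.exists_le_card_eq hk
  have htmem : t ∈ s.powersetCard k :=
    Multiset.mem_powersetCard.mpr ⟨ht.trans (Multiset.filter_le _ _), htc⟩
  have htpos : 0 < t.prod := by
    apply Multiset.prod_pos
    intro x hx
    have hx' := Multiset.mem_of_le ht hx
    have hxne : x ≠ 0 := (Multiset.mem_filter.mp hx').2
    have hx0 : 0 ≤ x := hs x (Multiset.mem_of_le (ht.trans (Multiset.filter_le _ _)) hx)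
    exact lt_of_le_of_ne hx0 (Ne.symm hxne)
  have hmem : t.prod ∈ (s.powersetCard k).map Multiset.prod := Multiset.mem_map_of_mem _ htmem
  have hnn : ∀ x ∈ (s.powersetCard k).map Multiset.prod, (0:ℝ) ≤ x := by
    intro x hx
    obtain ⟨u, hu, rfl⟩ := Multiset.mem_map.mp hx
    exact Multiset.prod_nonneg fun y hy =>
      hs y (Multiset.mem_of_le (Multiset.mem_powersetCard.mp hu).1 hy)
  exact lt_of_lt_of_le htpos (Multiset.single_le_sum hnn _ hmem)

lemma esymm_eq_zero {s : Multiset ℝ} {r : ℕ}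
    (hr : Multiset.card (s.filter (· ≠ 0)) < r) : s.esymm r = 0 := by
  unfold Multiset.esymm
  rw [Multiset.sum_eq_zero]
  intro x hx
  obtain ⟨u, hu, rfl⟩ := Multiset.mem_map.mp hx
  obtain ⟨hus, huc⟩ := Multiset.mem_powersetCard.mp hu
  apply Multiset.prod_eq_zero
  by_contra h0
  have : u.filter (· ≠ 0) = u := by
    apply Multiset.filter_eq_self.mpr
    intro y hy
    exact fun hy0 => h0 (hy0 ▸ hy)
  have hle : Multiset.card (u.filter (· ≠ 0)) ≤ Multiset.card (s.filter (· ≠ 0)) :=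
    Multiset.card_le_card (Multiset.filter_le_filter _ hus)
  rw [this, huc] at hle
  omega

/-- Theorem 2: if `ρ` is separable, `q` is the rank of `ρ^τ` and `a k` is the
`k`-th elementary symmetric polynomial of the (real) eigenvalues of the
Hermitian matrix `ρ^τ`, then `a k · a (k+1) > 0` for all `k < q`; moreover
`a q ≠ 0` and `a r = 0` for all `r > q`. -/
theorem separable_pt_moment_criterion (m n : ℕ)
    (ρ : Matrix (Fin m × Fin n) (Fin m × Fin n) ℂ)
    (hρ : ρ.PosSemidef) (htr : ρ.trace = 1) (hsep : IsSeparableState ρ)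
    (hH : (ptrans ρ).IsHermitian)
    (a : ℕ → ℝ) (ha : ∀ k, a k = (Finset.univ.val.map hH.eigenvalues).esymm k) :
    (∀ k < (ptrans ρ).rank, a k * a (k + 1) > 0) ∧
    a ((ptrans ρ).rank) ≠ 0 ∧
    ∀ r > (ptrans ρ).rank, a r = 0 := by
  have hpsd := ptrans_posSemidef hsep
  set s : Multiset ℝ := Finset.univ.val.map hH.eigenvalues with hs
  have hnn : ∀ x ∈ s, (0:ℝ) ≤ x := by
    intro x hx
    obtain ⟨i, -, rfl⟩ := Multiset.mem_map.mp hx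
    exact hpsd.eigenvalues_nonneg i
  have hcard : Multiset.card (s.filter (· ≠ 0)) = (ptrans ρ).rank := by
    rw [hH.rank_eq_card_non_zero_eigs]
    rw [← Multiset.countP_eq_card_filter, hs, Multiset.countP_map,
      Fintype.card_subtype]
    rfl
  refine ⟨?_, ?_, ?_⟩
  · intro k hk
    have h1 : 0 < a k := by rw [ha]; exact esymm_pos hnn (by omega)
    have h2 : 0 < a (k + 1) := by rw [ha]; exact esymm_pos hnn (by omega)
    exact mul_pos h1 h2
  · have : 0 < a ((ptrans ρ).rank) := by rw [ha]; exact esymm_pos hnn (by omega)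
    exact ne_of_gt this
  · intro r hr
    rw [ha]
    exact esymm_eq_zero (by omega)
end

section
/- Let M be an n×n Hermitian complex matrix of rank q, and for k = 0,1,…,n let a_k denote the k-th elementary symmetric polynomial of the (real) eigenvalues of M, with a₀ = 1. Then M is positive semidefinite if and only if a_k · a_{k+1} > 0 for every k = 0,1,…,q−1. -/
open ComplexOrder Matrix

-- Lemma A: esymm positive for k ≤ number of nonzero values, when all nonneg
lemma esymm_pos_of_nonneg {n : ℕ} (f : Fin n → ℝ) (hf : ∀ i, 0 ≤ f i) (k : ℕ)
    (hk : k ≤ (Finset.univ.filter fun i => f i ≠ 0).card) :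
    0 < (Finset.univ.val.map f).esymm k := by
  rw [Finset.esymm_map_val]
  obtain ⟨t, hts, htc⟩ := Finset.exists_subset_card_eq hk
  refine Finset.sum_pos' (fun s _ => Finset.prod_nonneg fun i _ => hf i) ⟨t, ?_, ?_⟩
  · exact Finset.mem_powersetCard.2 ⟨Finset.subset_univ t, htc⟩
  · exact Finset.prod_pos fun i hi => lt_of_le_of_ne (hf i)
      (Ne.symm ((Finset.mem_filter.1 (hts hi)).2))

-- Lemma B: esymm vanishes for k > number of nonzero values
lemma esymm_eq_zero_s4 {n : ℕ} (f : Fin n → ℝ) (k : ℕ)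
    (hk : (Finset.univ.filter fun i => f i ≠ 0).card < k) :
    (Finset.univ.val.map f).esymm k = 0 := by
  rw [Multiset.esymm]
  refine Multiset.sum_eq_zero fun x hx => ?_
  obtain ⟨t, ht, rfl⟩ := Multiset.mem_map.1 hx
  obtain ⟨htle, htc⟩ := (Multiset.mem_powersetCard).1 ht
  by_cases h0 : (0:ℝ) ∈ t
  · exact Multiset.prod_eq_zero h0
  · exfalso
    have : t ≤ (Finset.univ.val.map f).filter (· ≠ 0) :=
      Multiset.le_filter.2 ⟨htle, fun a hat => fun h => h0 (h ▸ hat)⟩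
    have hcard := Multiset.card_le_card this
    rw [htc, ← Multiset.countP_eq_card_filter, Multiset.countP_map] at hcard
    have : Multiset.card (Multiset.filter (fun a => f a ≠ 0) Finset.univ.val)
        = (Finset.univ.filter fun i => f i ≠ 0).card := rfl
    omega

-- Sign lemma: if all esymm are nonneg, the char-poly-like product has no negative root
lemma prod_sub_ne_zero {n : ℕ} (f : Fin n → ℝ)
    (he : ∀ k, 0 ≤ (Finset.univ.val.map f).esymm k) (x : ℝ) (hx : x < 0) :
    ((Finset.univ.val.map f).map fun t => x - t).prod ≠ 0 := by
  set s : Multiset ℝ := Finset.univ.val.map f with hs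
  have hcard : Multiset.card s = n := by simp [hs]
  set P : Polynomial ℝ := (s.map fun t => Polynomial.X - Polynomial.C t).prod with hP
  have hdeg : P.natDegree = n := by
    rw [hP, Polynomial.natDegree_multiset_prod_of_monic]
    · simp [Multiset.map_map, Function.comp_def, Polynomial.natDegree_X_sub_C, hcard]
    · intro g hg
      obtain ⟨t, _, rfl⟩ := Multiset.mem_map.1 hg
      exact Polynomial.monic_X_sub_C t
  have heval : P.eval x = ((Finset.univ.val.map f).map fun t => x - t).prod := by
    rw [hP, Polynomial.eval_multiset_prod, Multiset.map_map]
    congr 1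
    exact Multiset.map_congr rfl fun t _ => by simp
  rw [← heval]
  have hsum : P.eval x = ∑ k ∈ Finset.range (n + 1), P.coeff k * x ^ k :=
    Polynomial.eval_eq_sum_range' (by omega) x
  have hcoeff : ∀ k ≤ n, P.coeff k = (-1) ^ (n - k) * s.esymm (n - k) := by
    intro k hk
    rw [hP, Multiset.prod_X_sub_C_coeff s (by omega), hcard]
  have key : P.eval x = (-1) ^ n * ∑ k ∈ Finset.range (n + 1), s.esymm (n - k) * (-x) ^ k := by
    rw [hsum, Finset.mul_sum]
    refine Finset.sum_congr rfl fun k hk => ?_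
    have hkn : k ≤ n := by simpa using Nat.lt_succ_iff.mp (Finset.mem_range.1 hk)
    rw [hcoeff k hkn]
    have : (-x) ^ k = (-1) ^ k * x ^ k := by rw [neg_pow]
    rw [this]
    have hpow : (-1 : ℝ) ^ (n - k) * (-1) ^ k = (-1) ^ n := by
      rw [← pow_add]; congr 1; omega
    have hB : ((-1 : ℝ) ^ k) ^ 2 = 1 := by
      rw [← pow_mul, mul_comm, pow_mul]; norm_num
    linear_combination (s.esymm (n - k) * x ^ k * (-1 : ℝ) ^ k) * hpow +
      (-(s.esymm (n - k) * x ^ k * (-1 : ℝ) ^ (n - k))) * hB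
  have hspos : 0 < ∑ k ∈ Finset.range (n + 1), s.esymm (n - k) * (-x) ^ k := by
    refine Finset.sum_pos' (fun k _ => mul_nonneg (he _) (pow_nonneg (by linarith) k))
      ⟨n, Finset.self_mem_range_succ n, ?_⟩
    simp only [Nat.sub_self]
    have : s.esymm 0 = 1 := by simp [Multiset.esymm]
    rw [this, one_mul]
    exact pow_pos (by linarith) n
  rw [key]
  have : (-1 : ℝ) ^ n ≠ 0 := by positivity
  positivity

/-- Matrix-theoretic core of Theorem 2: an `n×n` Hermitian complex matrix `M`
of rank `q` is positive semidefinite if and only if `a k · a (k+1) > 0` for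
every `k = 0, 1, …, q−1`, where `a k` denotes the `k`-th elementary symmetric
polynomial of the (real) eigenvalues of `M` (so `a 0 = 1`). -/
theorem posSemidef_iff_esymm_products_pos (n : ℕ)
    (M : Matrix (Fin n) (Fin n) ℂ) (hM : M.IsHermitian)
    (a : ℕ → ℝ) (ha : ∀ k, a k = (Finset.univ.val.map hM.eigenvalues).esymm k) :
    M.PosSemidef ↔ ∀ k < M.rank, a k * a (k + 1) > 0 := by
  classical
  have hrank : M.rank = (Finset.univ.filter fun i => hM.eigenvalues i ≠ 0).card := by
    rw [hM.rank_eq_card_non_zero_eigs, Fintype.card_subtype]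
  constructor
  · intro hpsd k hk
    have hf : ∀ i, 0 ≤ hM.eigenvalues i := fun i => hpsd.eigenvalues_nonneg i
    rw [ha k, ha (k + 1)]
    exact mul_pos (esymm_pos_of_nonneg _ hf k (by omega))
      (esymm_pos_of_nonneg _ hf (k + 1) (by omega))
  · intro h
    have hposk : ∀ k ≤ M.rank, 0 < a k := by
      intro k
      induction k with
      | zero => intro _; rw [ha 0]; simpa [Multiset.esymm] using one_pos
      | succ k ih =>
        intro hk
        have h1 := ih (by omega)
        have h2 := h k (by omega)
        nlinarith
    have hnn : ∀ k, 0 ≤ (Finset.univ.val.map hM.eigenvalues).esymm k := by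
      intro k
      rcases le_or_gt k M.rank with hk | hk
      · rw [← ha k]; exact (hposk k hk).le
      · exact (esymm_eq_zero_s4 hM.eigenvalues k (by omega)).ge
    refine hM.posSemidef_iff_eigenvalues_nonneg.mpr fun i => ?_
    by_contra hneg
    push_neg at hneg
    refine prod_sub_ne_zero hM.eigenvalues hnn (hM.eigenvalues i) hneg ?_
    refine Multiset.prod_eq_zero ?_
    rw [Multiset.mem_map]
    exact ⟨hM.eigenvalues i, Multiset.mem_map.2 ⟨i, Finset.mem_univ i, rfl⟩, sub_self _⟩
end

section
/- Theorem 3: Let 2 ≤ m ≤ n and let ρ be a bipartite quantum state on ℂ^m ⊗ ℂ^n. Set M₁ = √( √(2·(T₁² − T₂)) + T₁ ) − 1 with T_i = Tr[((ρ^τ)†ρ^τ)^i], and M₂ = √( √(2·((T^R₁)² − T^R₂)) + T^R₁ ) − 1 with T^R_i = Tr[((ρ^R)†ρ^R)^i], for i = 1,2. Then the concurrence of ρ satisfies C(ρ) ≥ √(2/(m(m−1))) · max{M₁, M₂, 0}. -/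
open ComplexOrder Matrix

/-- The reduced density matrix on the first subsystem of the pure state
`|ψ⟩⟨ψ|`: `(ρ_A)_{i,j} = ∑_k ψ_{(i,k)} conj(ψ_{(j,k)})`. -/
noncomputable def reducedA {m n : ℕ} (ψ : Fin m × Fin n → ℂ) :
    Matrix (Fin m) (Fin m) ℂ :=
  fun i j => ∑ k : Fin n, ψ (i, k) * star (ψ (j, k))

/-- The concurrence of a bipartite pure state `ψ`:
`C(ψ) = √(2(1 − Tr(ρ_A²)))`. -/
noncomputable def pureConcurrence {m n : ℕ} (ψ : Fin m × Fin n → ℂ) : ℝ :=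
  Real.sqrt (2 * (1 - ((reducedA ψ ^ 2).trace).re))

/-- The concurrence of a bipartite mixed state `ρ`: the infimum of
`∑ p_i C(ψ_i)` over all finite pure-state ensembles realizing `ρ`. -/
noncomputable def concurrence {m n : ℕ}
    (ρ : Matrix (Fin m × Fin n) (Fin m × Fin n) ℂ) : ℝ :=
  sInf { c : ℝ | ∃ (s : ℕ) (p : Fin s → ℝ) (ψ : Fin s → (Fin m × Fin n → ℂ)),
    (∀ i, 0 ≤ p i) ∧ (∑ i, p i = 1) ∧
    (∀ i, ∑ x, Complex.normSq (ψ i x) = 1) ∧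
    ρ = ∑ i, (p i : ℂ) • Matrix.vecMulVec (ψ i) (fun x => star (ψ i x)) ∧
    c = ∑ i, p i * pureConcurrence (ψ i) }


namespace ConcAux

open Finset

variable {α β γ δ : Type*} [Fintype α] [Fintype β] [Fintype γ] [Fintype δ]

/-- squared ℓ² norm of a complex vector -/
noncomputable def nsq (v : α → ℂ) : ℝ := ∑ x, Complex.normSq (v x)

lemma nsq_nonneg (v : α → ℂ) : 0 ≤ nsq v :=
  Finset.sum_nonneg fun _ _ => Complex.normSq_nonneg _

lemma dot_star_self (v : α → ℂ) : dotProduct (star v) v = (nsq v : ℂ) := by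
  simp only [dotProduct, Pi.star_apply, nsq, Complex.ofReal_sum]
  exact Finset.sum_congr rfl fun x _ => by
    rw [Complex.normSq_eq_conj_mul_self]; rfl

/-- embedding into EuclideanSpace -/
noncomputable def toE (v : α → ℂ) : EuclideanSpace ℂ α := (WithLp.equiv 2 _).symm v

lemma inner_toE (v w : α → ℂ) : (inner ℂ (toE v) (toE w) : ℂ) = dotProduct (star v) w := by
  rw [EuclideanSpace.inner_eq_star_dotProduct, dotProduct_comm]; rfl

lemma norm_toE (v : α → ℂ) : ‖toE v‖ = Real.sqrt (nsq v) := by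
  rw [EuclideanSpace.norm_eq]
  congr 1
  refine Finset.sum_congr rfl fun x _ => ?_
  rw [← Complex.sq_norm]
  rfl

lemma abs_dot_le (v w : α → ℂ) :
    ‖dotProduct (star v) w‖ ≤ Real.sqrt (nsq v) * Real.sqrt (nsq w) := by
  have h := norm_inner_le_norm (𝕜 := ℂ) (toE v) (toE w)
  rwa [inner_toE, norm_toE, norm_toE] at h

/-- `Y` is a contraction -/
def IsContr (Y : Matrix β α ℂ) : Prop := ∀ v : α → ℂ, nsq (Y *ᵥ v) ≤ nsq v

lemma trace_mul_vecMulVec (Y : Matrix δ γ ℂ) (x : γ → ℂ) (y : δ → ℂ) :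
    (Y * Matrix.vecMulVec x (fun q => star (y q))).trace
      = dotProduct (star y) (Y *ᵥ x) := by
  simp only [Matrix.trace, Matrix.diag, Matrix.mul_apply, Matrix.vecMulVec_apply,
    dotProduct, Matrix.mulVec, Pi.star_apply, Finset.mul_sum]
  exact Finset.sum_congr rfl fun d _ => Finset.sum_congr rfl fun g _ => by ring

lemma re_trace_vecMulVec_le {Y : Matrix δ γ ℂ} (hY : IsContr Y) (x : γ → ℂ) (y : δ → ℂ) :
    ((Y * Matrix.vecMulVec x (fun q => star (y q))).trace).re
      ≤ Real.sqrt (nsq x) * Real.sqrt (nsq y) := by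
  rw [trace_mul_vecMulVec]
  calc (dotProduct (star y) (Y *ᵥ x)).re
      ≤ ‖dotProduct (star y) (Y *ᵥ x)‖ := Complex.re_le_norm _
    _ ≤ Real.sqrt (nsq y) * Real.sqrt (nsq (Y *ᵥ x)) := abs_dot_le _ _
    _ ≤ Real.sqrt (nsq y) * Real.sqrt (nsq x) := by
        gcongr
        exact hY x
    _ = Real.sqrt (nsq x) * Real.sqrt (nsq y) := mul_comm _ _

lemma re_trace_mul_sum_le {ι : Type*} [Fintype ι] {Y : Matrix δ γ ℂ} (hY : IsContr Y)
    (x : ι → γ → ℂ) (y : ι → δ → ℂ) (c : ι → ℝ)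
    (hc : ∀ i, Real.sqrt (nsq (x i)) * Real.sqrt (nsq (y i)) ≤ c i) :
    ((Y * ∑ i, Matrix.vecMulVec (x i) (fun q => star (y i q))).trace).re ≤ ∑ i, c i := by
  rw [Matrix.mul_sum, Matrix.trace_sum, Complex.re_sum]
  exact Finset.sum_le_sum fun i _ => (re_trace_vecMulVec_le hY _ _).trans (hc i)

/-- (∑ s)² = ∑ s² + off-diagonal sum -/
lemma sq_sum_eq {ι : Type*} [Fintype ι] [DecidableEq ι] (s : ι → ℝ) :
    (∑ i, s i) ^ 2 = ∑ i, (s i) ^ 2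
      + ∑ p ∈ (Finset.univ : Finset ι).offDiag, s p.1 * s p.2 := by
  rw [sq, Finset.sum_mul_sum, ← Finset.sum_product']
  rw [← Finset.diag_union_offDiag (Finset.univ : Finset ι),
    Finset.sum_union (Finset.disjoint_diag_offDiag _), Finset.sum_diag]
  simp [sq]

lemma offdiag_sq_le {ι : Type*} [Fintype ι] [DecidableEq ι] (g : ι × ι → ℝ)
    (hg0 : ∀ p, 0 ≤ g p) (hgs : ∀ p : ι × ι, g (p.2, p.1) = g p) :
    2 * ∑ p ∈ (Finset.univ : Finset ι).offDiag, (g p) ^ 2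
      ≤ (∑ p ∈ (Finset.univ : Finset ι).offDiag, g p) ^ 2 := by
  rw [sq, Finset.sum_mul_sum, Finset.mul_sum]
  refine Finset.sum_le_sum fun p hp => ?_
  have hp' : p.1 ≠ p.2 := (Finset.mem_offDiag.mp hp).2.2
  have hswap : p.swap ∈ (Finset.univ : Finset ι).offDiag := by
    simp [Finset.mem_offDiag, Prod.swap, hp'.symm]
  have hne : p ≠ p.swap := fun h => hp' (congrArg Prod.fst h)
  calc 2 * g p ^ 2 = ∑ q ∈ ({p, p.swap} : Finset (ι × ι)), g p * g q := by
        rw [Finset.sum_pair hne]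
        have : g p.swap = g p := hgs p
        rw [this]; ring
    _ ≤ ∑ q ∈ (Finset.univ : Finset ι).offDiag, g p * g q := by
        refine Finset.sum_le_sum_of_subset_of_nonneg ?_ fun q _ _ => mul_nonneg (hg0 p) (hg0 q)
        intro q hq
        rcases Finset.mem_insert.mp hq with h | h
        · exact h ▸ hp
        · rw [Finset.mem_singleton.mp h]; exact hswap

/-- moment arithmetic lower bound -/
lemma moment_le {ι : Type*} [Fintype ι] [DecidableEq ι] (l : ι → ℝ) (h0 : ∀ i, 0 ≤ l i) :
    Real.sqrt (Real.sqrt (2 * ((∑ i, l i) ^ 2 - ∑ i, (l i) ^ 2)) + ∑ i, l i)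
      ≤ ∑ i, Real.sqrt (l i) := by
  set s : ι → ℝ := fun i => Real.sqrt (l i) with hs
  have hsq : ∀ i, s i ^ 2 = l i := fun i => Real.sq_sqrt (h0 i)
  set t := ∑ p ∈ (Finset.univ : Finset ι).offDiag, s p.1 * s p.2 with ht
  have ht0 : 0 ≤ t :=
    Finset.sum_nonneg fun p _ => mul_nonneg (Real.sqrt_nonneg _) (Real.sqrt_nonneg _)
  have h1 : (∑ i, s i) ^ 2 = (∑ i, l i) + t := by
    rw [sq_sum_eq s]; congr 1; exact Finset.sum_congr rfl fun i _ => hsq i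
  have h2 : (∑ i, l i) ^ 2 - ∑ i, (l i) ^ 2
      = ∑ p ∈ (Finset.univ : Finset ι).offDiag, l p.1 * l p.2 := by
    have := sq_sum_eq l; linarith
  have h3 : 2 * ((∑ i, l i) ^ 2 - ∑ i, (l i) ^ 2) ≤ t ^ 2 := by
    rw [h2]
    have := offdiag_sq_le (fun p => s p.1 * s p.2)
      (fun p => mul_nonneg (Real.sqrt_nonneg _) (Real.sqrt_nonneg _))
      (fun p => mul_comm _ _)
    calc 2 * ∑ p ∈ (Finset.univ : Finset ι).offDiag, l p.1 * l p.2
        = 2 * ∑ p ∈ (Finset.univ : Finset ι).offDiag, (s p.1 * s p.2) ^ 2 := by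
          congr 1; refine Finset.sum_congr rfl fun p _ => ?_
          rw [mul_pow, hsq, hsq]
      _ ≤ t ^ 2 := this
  have h4 : Real.sqrt (2 * ((∑ i, l i) ^ 2 - ∑ i, (l i) ^ 2)) ≤ t := by
    calc Real.sqrt (2 * ((∑ i, l i) ^ 2 - ∑ i, (l i) ^ 2)) ≤ Real.sqrt (t ^ 2) :=
          Real.sqrt_le_sqrt h3
      _ = t := Real.sqrt_sq ht0
  calc Real.sqrt (Real.sqrt (2 * ((∑ i, l i) ^ 2 - ∑ i, (l i) ^ 2)) + ∑ i, l i)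
      ≤ Real.sqrt (t + ∑ i, l i) := Real.sqrt_le_sqrt (by linarith)
    _ = Real.sqrt ((∑ i, s i) ^ 2) := by rw [h1]; ring_nf
    _ = ∑ i, s i := Real.sqrt_sq (Finset.sum_nonneg fun i _ => Real.sqrt_nonneg _)

/-- Schmidt-coefficient arithmetic: `(∑√μ)² ≤ 1 + √(m(m-1)/2)·√(2(1-∑μ²))`. -/
lemma schmidt_sq_le {m : ℕ} (μ : Fin m → ℝ) (h0 : ∀ i, 0 ≤ μ i) (h1 : ∑ i, μ i = 1) :
    (∑ i, Real.sqrt (μ i)) ^ 2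
      ≤ 1 + Real.sqrt ((m : ℝ) * ((m : ℝ) - 1) / 2) * Real.sqrt (2 * (1 - ∑ i, (μ i) ^ 2)) := by
  set s : Fin m → ℝ := fun i => Real.sqrt (μ i) with hs
  have hsq : ∀ i, s i ^ 2 = μ i := fun i => Real.sq_sqrt (h0 i)
  set t := ∑ p ∈ (Finset.univ : Finset (Fin m)).offDiag, s p.1 * s p.2 with ht
  have ht0 : 0 ≤ t :=
    Finset.sum_nonneg fun p _ => mul_nonneg (Real.sqrt_nonneg _) (Real.sqrt_nonneg _)
  have hq : (1 : ℝ) - ∑ i, (μ i) ^ 2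
      = ∑ p ∈ (Finset.univ : Finset (Fin m)).offDiag, μ p.1 * μ p.2 := by
    have := sq_sum_eq μ; rw [h1] at this; linarith [this]
  have hq0 : 0 ≤ (1 : ℝ) - ∑ i, (μ i) ^ 2 := by
    rw [hq]
    exact Finset.sum_nonneg fun p _ => mul_nonneg (h0 _) (h0 _)
  have hmm : m ≤ m * m := by nlinarith [Nat.zero_le m]
  have hcard : ((Finset.univ : Finset (Fin m)).offDiag.card : ℝ)
      = (m : ℝ) * (m : ℝ) - (m : ℝ) := by
    rw [Finset.offDiag_card]
    simp only [Finset.card_univ, Fintype.card_fin]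
    rw [Nat.cast_sub hmm]
    push_cast
    ring
  have hmm0 : (0 : ℝ) ≤ (m : ℝ) * (m : ℝ) - (m : ℝ) := by
    rw [← hcard]; exact Nat.cast_nonneg _
  have h3 : t ^ 2 ≤ ((m : ℝ) * (m : ℝ) - (m : ℝ)) * (1 - ∑ i, (μ i) ^ 2) := by
    calc t ^ 2 ≤ ((Finset.univ : Finset (Fin m)).offDiag.card : ℝ)
          * ∑ p ∈ (Finset.univ : Finset (Fin m)).offDiag, (s p.1 * s p.2) ^ 2 :=
          sq_sum_le_card_mul_sum_sq
      _ = ((m : ℝ) * (m : ℝ) - (m : ℝ)) * (1 - ∑ i, (μ i) ^ 2) := by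
          rw [hcard, hq]
          congr 1
          refine Finset.sum_congr rfl fun p _ => ?_
          rw [mul_pow, hsq, hsq]
  have h5 : t ≤ Real.sqrt (((m : ℝ) * (m : ℝ) - (m : ℝ)) * (1 - ∑ i, (μ i) ^ 2)) :=
    (Real.le_sqrt ht0 (mul_nonneg hmm0 hq0)).mpr h3
  have h6 : Real.sqrt (((m : ℝ) * (m : ℝ) - (m : ℝ)) * (1 - ∑ i, (μ i) ^ 2))
      = Real.sqrt ((m : ℝ) * ((m : ℝ) - 1) / 2) * Real.sqrt (2 * (1 - ∑ i, (μ i) ^ 2)) := by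
    rw [← Real.sqrt_mul (by nlinarith [hmm0] : (0:ℝ) ≤ (m : ℝ) * ((m : ℝ) - 1) / 2)]
    congr 1
    ring
  have h7 : (∑ i, s i) ^ 2 = 1 + t := by
    rw [sq_sum_eq s, ← ht]
    have : ∑ i, s i ^ 2 = ∑ i, μ i := Finset.sum_congr rfl fun i _ => hsq i
    rw [this, h1]
  rw [h7]
  linarith [h6 ▸ h5]

section Spectral

variable {β : Type*} [Fintype β] [DecidableEq β] {H : Matrix β β ℂ}

/-- the `i`-th eigenvector of a Hermitian matrix, as a plain function -/
noncomputable def evec (hH : H.IsHermitian) (i : β) : β → ℂ :=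
  (WithLp.equiv 2 (β → ℂ)) (hH.eigenvectorBasis i)

lemma evec_dot (hH : H.IsHermitian) (i j : β) :
    dotProduct (star (evec hH i)) (evec hH j) = if i = j then 1 else 0 := by
  have h := (orthonormal_iff_ite (𝕜 := ℂ)).mp hH.eigenvectorBasis.orthonormal i j
  rw [EuclideanSpace.inner_eq_star_dotProduct, dotProduct_comm] at h
  exact h

lemma nsq_evec (hH : H.IsHermitian) (i : β) : nsq (evec hH i) = 1 := by
  have h := evec_dot hH i i
  rw [dot_star_self, if_pos rfl] at h
  exact_mod_cast h

lemma evec_complete (hH : H.IsHermitian) (p q : β) :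
    ∑ i, evec hH i p * star (evec hH i q) = if p = q then 1 else 0 := by
  have h := Matrix.mem_unitaryGroup_iff.mp hH.eigenvectorUnitary.2
  have h2 : (((hH.eigenvectorUnitary : Matrix β β ℂ)
      * star (hH.eigenvectorUnitary : Matrix β β ℂ))) p q = (1 : Matrix β β ℂ) p q := by
    rw [h]
  rw [Matrix.mul_apply, Matrix.one_apply] at h2
  rw [← h2]
  refine Finset.sum_congr rfl fun i _ => ?_
  rw [Matrix.star_apply, hH.eigenvectorUnitary_apply, hH.eigenvectorUnitary_apply]
  rfl

lemma mulVec_evec (hH : H.IsHermitian) (i : β) :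
    H *ᵥ evec hH i = hH.eigenvalues i • evec hH i :=
  hH.mulVec_eigenvectorBasis i

lemma expand_matrix (hH : H.IsHermitian) (M : Matrix β β ℂ) (p q : β) :
    M p q = ∑ i, (M *ᵥ evec hH i) p * star (evec hH i q) := by
  have : ∑ i, (M *ᵥ evec hH i) p * star (evec hH i q)
      = ∑ r, M p r * ∑ i, evec hH i r * star (evec hH i q) := by
    simp only [Matrix.mulVec, dotProduct, Finset.sum_mul, Finset.mul_sum]
    rw [Finset.sum_comm]
    exact Finset.sum_congr rfl fun r _ => Finset.sum_congr rfl fun i _ => by ring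
  rw [this]
  simp only [evec_complete hH, mul_ite, mul_one, mul_zero, Finset.sum_ite_eq',
    Finset.mem_univ, if_true]

lemma trace_eq_sum_dot (hH : H.IsHermitian) (M : Matrix β β ℂ) :
    M.trace = ∑ i, dotProduct (star (evec hH i)) (M *ᵥ evec hH i) := by
  have : ∀ i, dotProduct (star (evec hH i)) (M *ᵥ evec hH i)
      = ∑ p, (M *ᵥ evec hH i) p * star (evec hH i p) := by
    intro i
    simp only [dotProduct, Pi.star_apply]
    exact Finset.sum_congr rfl fun p _ => by ring
  simp only [this]
  rw [Finset.sum_comm]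
  simp only [Matrix.trace, Matrix.diag]
  exact Finset.sum_congr rfl fun p _ => expand_matrix hH M p p

lemma trace_hermitian (hH : H.IsHermitian) :
    H.trace = ((∑ i, hH.eigenvalues i : ℝ) : ℂ) := by
  rw [trace_eq_sum_dot hH H, Complex.ofReal_sum]
  refine Finset.sum_congr rfl fun i _ => ?_
  rw [mulVec_evec hH, dotProduct_smul, dot_star_self, nsq_evec hH]
  simp [Complex.real_smul]

lemma trace_sq_hermitian (hH : H.IsHermitian) :
    (H * H).trace = ((∑ i, (hH.eigenvalues i) ^ 2 : ℝ) : ℂ) := by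
  rw [trace_eq_sum_dot hH (H * H), Complex.ofReal_sum]
  refine Finset.sum_congr rfl fun i _ => ?_
  rw [← Matrix.mulVec_mulVec, mulVec_evec hH, Matrix.mulVec_smul, mulVec_evec hH,
    smul_smul, dotProduct_smul, dot_star_self, nsq_evec hH]
  simp [Complex.real_smul, sq]

end Spectral

section Contraction

variable {α β : Type*} [Fintype α] [Fintype β] [DecidableEq β]

lemma dot_selfmul (X : Matrix α β ℂ) (u v : β → ℂ) :
    dotProduct (star (X *ᵥ u)) (X *ᵥ v)
      = dotProduct (star u) ((Xᴴ * X) *ᵥ v) := by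
  rw [Matrix.star_mulVec, ← Matrix.dotProduct_mulVec, Matrix.mulVec_mulVec]

lemma dot_sum_sum {ι κ : Type*} [Fintype ι] [Fintype κ] (f : ι → β → ℂ) (g : κ → β → ℂ) :
    dotProduct (star (fun b => ∑ i, f i b)) (fun b => ∑ j, g j b)
      = ∑ i, ∑ j, dotProduct (star (f i)) (g j) := by
  simp only [dotProduct, Pi.star_apply, star_sum, Finset.sum_mul_sum]
  rw [Finset.sum_comm]
  exact Finset.sum_congr rfl fun i _ => Finset.sum_comm

lemma dot_smul_mul (a b : ℂ) (f g : β → ℂ) :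
    dotProduct (star (fun x => a * f x)) (fun x => b * g x)
      = star a * b * dotProduct (star f) g := by
  simp only [dotProduct, Pi.star_apply, star_mul', Finset.mul_sum]
  exact Finset.sum_congr rfl fun x _ => by ring

lemma exists_contraction (X : Matrix α β ℂ) :
    ∃ Y : Matrix β α ℂ, IsContr Y ∧
      (Y * X).trace =
        ((∑ i, Real.sqrt ((Matrix.posSemidef_conjTranspose_mul_self X).1.eigenvalues i) : ℝ) : ℂ) := by
  have hH := Matrix.posSemidef_conjTranspose_mul_self X
  set lam : β → ℝ := hH.1.eigenvalues with hlam
  have hl0 : ∀ i, 0 ≤ lam i := hH.eigenvalues_nonneg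
  set u : β → β → ℂ := fun i => evec hH.1 i with hu
  set c : β → ℂ := fun i => if 0 < lam i then (((Real.sqrt (lam i)) : ℝ) : ℂ)⁻¹ else 0 with hc
  set Y : Matrix β α ℂ := ∑ i, c i • Matrix.vecMulVec (u i) (fun a => star ((X *ᵥ u i) a))
    with hY
  have hXu : ∀ i j, dotProduct (star (X *ᵥ u i)) (X *ᵥ u j)
      = if i = j then ((lam j : ℝ) : ℂ) else 0 := by
    intro i j
    rw [dot_selfmul, mulVec_evec hH.1, dotProduct_smul, evec_dot hH.1]
    by_cases h : i = j <;> simp [h, Complex.real_smul] <;> rfl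
  refine ⟨Y, ?_, ?_⟩
  · -- contraction
    intro v
    set d : β → ℂ := fun i => dotProduct (star (X *ᵥ u i)) v with hd
    set a : β → ℂ := fun i => c i * d i with ha
    have hYv : Y *ᵥ v = fun b => ∑ i, a i * u i b := by
      funext b
      simp only [hY, Matrix.mulVec, dotProduct, Matrix.sum_apply, Matrix.smul_apply,
        Matrix.vecMulVec_apply, smul_eq_mul, ha, hd, Finset.sum_mul, Finset.mul_sum,
        Pi.star_apply]
      rw [Finset.sum_comm]
      exact Finset.sum_congr rfl fun i _ => Finset.sum_congr rfl fun x _ => by ring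
    have horth : nsq (Y *ᵥ v) = ∑ i, Complex.normSq (a i) := by
      have hC : ((nsq (Y *ᵥ v) : ℝ) : ℂ) = ((∑ i, Complex.normSq (a i) : ℝ) : ℂ) := by
        rw [← dot_star_self, hYv, dot_sum_sum (fun i b => a i * u i b) (fun i b => a i * u i b)]
        rw [Complex.ofReal_sum]
        have : ∀ i j, dotProduct (star (fun b => a i * u i b)) (fun b => a j * u j b)
            = if i = j then ((Complex.normSq (a i) : ℝ) : ℂ) else 0 := by
          intro i j
          rw [dot_smul_mul, evec_dot hH.1]
          by_cases h : i = j
          · subst h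
            simp [Complex.normSq_eq_conj_mul_self, Complex.star_def]
          · simp [h]
        calc ∑ i, ∑ j, dotProduct (star (fun b => a i * u i b)) (fun b => a j * u j b)
            = ∑ i, ∑ j, (if i = j then ((Complex.normSq (a i) : ℝ) : ℂ) else 0) := by
              exact Finset.sum_congr rfl fun i _ => Finset.sum_congr rfl fun j _ => this i j
          _ = ∑ i, ((Complex.normSq (a i) : ℝ) : ℂ) := by
              refine Finset.sum_congr rfl fun i _ => ?_
              simp
      exact_mod_cast hC
    rw [horth]
    -- each |a i|²
    have hai : ∀ i, Complex.normSq (a i)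
        = if 0 < lam i then (lam i)⁻¹ * Complex.normSq (d i) else 0 := by
      intro i
      by_cases h : 0 < lam i
      · simp only [ha, hc, if_pos h, Complex.normSq_mul, Complex.normSq_inv,
          Complex.normSq_ofReal, Real.mul_self_sqrt (hl0 i)]
      · simp [ha, hc, if_neg h]
    -- Bessel
    set V : {i : β // 0 < lam i} → EuclideanSpace ℂ α :=
      fun i => toE ((Real.sqrt (lam i.1))⁻¹ • (X *ᵥ u i.1)) with hV
    have hstar : ∀ (r : ℝ) (w : α → ℂ), star (r • w) = r • star w := fun r w => by
      funext x; simp [Complex.real_smul]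
    have hVo : Orthonormal ℂ V := by
      rw [orthonormal_iff_ite]
      intro i j
      rw [hV, inner_toE, hstar, smul_dotProduct, dotProduct_smul, hXu]
      by_cases h : i = j
      · subst h
        have hpos := i.2
        have hr : (Real.sqrt (lam i.1))⁻¹ * ((Real.sqrt (lam i.1))⁻¹ * lam i.1) = 1 := by
          rw [← mul_assoc, ← mul_inv, Real.mul_self_sqrt (hl0 i.1)]
          exact inv_mul_cancel₀ (ne_of_gt hpos)
        rw [if_pos rfl, if_pos rfl, Complex.real_smul, Complex.real_smul]
        exact_mod_cast hr
      · have h' : (i : β) ≠ (j : β) := fun hh => h (Subtype.ext hh)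
        simp [h, h']
    have hBessel := hVo.sum_inner_products_le (s := Finset.univ) (toE v)
    have hInner : ∀ i : {i : β // 0 < lam i},
        ‖(inner ℂ (V i) (toE v) : ℂ)‖ ^ 2 = (lam i.1)⁻¹ * Complex.normSq (d i.1) := by
      intro i
      rw [hV, inner_toE, hstar, smul_dotProduct]
      rw [Complex.sq_norm, Complex.real_smul, Complex.normSq_mul,
        Complex.normSq_ofReal]
      congr 1
      rw [← Real.sqrt_inv, Real.mul_self_sqrt (inv_nonneg.mpr (hl0 i.1))]
    have hnormv : ‖toE v‖ ^ 2 = nsq v := by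
      rw [norm_toE, Real.sq_sqrt (nsq_nonneg v)]
    rw [hnormv] at hBessel
    calc ∑ i, Complex.normSq (a i)
        = ∑ i, (if 0 < lam i then (lam i)⁻¹ * Complex.normSq (d i) else 0) :=
          Finset.sum_congr rfl fun i _ => hai i
      _ = ∑ i ∈ Finset.univ.filter (fun i => 0 < lam i), (lam i)⁻¹ * Complex.normSq (d i) :=
          (Finset.sum_filter _ _).symm
      _ = ∑ i : {i : β // 0 < lam i}, (lam i.1)⁻¹ * Complex.normSq (d i.1) :=
          Finset.sum_subtype (Finset.univ.filter (fun i => 0 < lam i))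
            (fun x => by simp) (fun i => (lam i)⁻¹ * Complex.normSq (d i))
      _ = ∑ i : {i : β // 0 < lam i}, ‖(inner ℂ (V i) (toE v) : ℂ)‖ ^ 2 :=
          Finset.sum_congr rfl fun i _ => (hInner i).symm
      _ ≤ nsq v := hBessel
  · -- trace
    rw [hY, Matrix.sum_mul]
    rw [Matrix.trace_sum, Complex.ofReal_sum]
    refine Finset.sum_congr rfl fun i _ => ?_
    rw [Matrix.smul_mul, Matrix.trace_smul, Matrix.trace_mul_comm,
      trace_mul_vecMulVec X (u i) (X *ᵥ u i), hXu i i, if_pos rfl]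
    by_cases h : 0 < lam i
    · have hs : Real.sqrt (lam i) ≠ 0 := ne_of_gt (Real.sqrt_pos.mpr h)
      have hr : (Real.sqrt (lam i))⁻¹ * lam i = Real.sqrt (lam i) := by
        rw [inv_mul_eq_div, div_eq_iff hs]
        exact (Real.mul_self_sqrt (hl0 i)).symm
      rw [hc]
      simp only [if_pos h, smul_eq_mul]
      rw [← Complex.ofReal_inv, ← Complex.ofReal_mul, hr]
    · have h0 : lam i = 0 := le_antisymm (not_lt.mp h) (hl0 i)
      rw [hc]
      simp [if_neg h, h0]

end Contraction

section Moment

variable {α β : Type*} [Fintype α] [Fintype β] [DecidableEq β]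

lemma moment_contraction (X : Matrix α β ℂ) :
    ∃ Y : Matrix β α ℂ, IsContr Y ∧
      Real.sqrt (Real.sqrt (2 * (((Xᴴ * X).trace.re) ^ 2 - ((Xᴴ * X) ^ 2).trace.re))
          + (Xᴴ * X).trace.re) ≤ ((Y * X).trace).re := by
  obtain ⟨Y, hY, htr⟩ := exists_contraction X
  have hH := Matrix.posSemidef_conjTranspose_mul_self X
  refine ⟨Y, hY, ?_⟩
  have h1 : (Xᴴ * X).trace.re = ∑ i, hH.1.eigenvalues i := by
    rw [trace_hermitian hH.1, Complex.ofReal_re]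
  have h2 : ((Xᴴ * X) ^ 2).trace.re = ∑ i, (hH.1.eigenvalues i) ^ 2 := by
    rw [sq, trace_sq_hermitian hH.1, Complex.ofReal_re]
  rw [h1, h2, htr, Complex.ofReal_re]
  exact moment_le hH.1.eigenvalues hH.eigenvalues_nonneg

end Moment

section Pure

variable {m n : ℕ}

lemma mul_star_self (z : ℂ) : z * star z = ((Complex.normSq z : ℝ) : ℂ) := by
  rw [mul_comm, Complex.normSq_eq_conj_mul_self]; rfl

lemma reducedA_posSemidef (ψ : Fin m × Fin n → ℂ) : (reducedA ψ).PosSemidef := by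
  have h : reducedA ψ = (Matrix.of fun i k => ψ (i, k)) * (Matrix.of fun i k => ψ (i, k))ᴴ := by
    ext i j
    simp [reducedA, Matrix.mul_apply, Matrix.conjTranspose_apply]
  rw [h]
  exact Matrix.posSemidef_self_mul_conjTranspose _

lemma trace_reducedA (ψ : Fin m × Fin n → ℂ) (hψ : ∑ x, Complex.normSq (ψ x) = 1) :
    ∑ i, (reducedA_posSemidef ψ).1.eigenvalues i = 1 := by
  have h := trace_hermitian (reducedA_posSemidef ψ).1
  have h2 : (reducedA ψ).trace = ((∑ x : Fin m × Fin n, Complex.normSq (ψ x) : ℝ) : ℂ) := by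
    rw [Complex.ofReal_sum, Fintype.sum_prod_type, Matrix.trace]
    refine Finset.sum_congr rfl fun i _ => ?_
    simp only [Matrix.diag, reducedA]
    exact Finset.sum_congr rfl fun k _ => mul_star_self _
  rw [h2, hψ] at h
  exact_mod_cast h.symm

lemma pureConcurrence_eq (ψ : Fin m × Fin n → ℂ) :
    pureConcurrence ψ
      = Real.sqrt (2 * (1 - ∑ i, ((reducedA_posSemidef ψ).1.eigenvalues i) ^ 2)) := by
  unfold pureConcurrence
  rw [sq, trace_sq_hermitian (reducedA_posSemidef ψ).1, Complex.ofReal_re]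

lemma nsq_tensor {γ δ : Type*} [Fintype γ] [Fintype δ] (f : γ → ℂ) (g : δ → ℂ) :
    nsq (fun q : γ × δ => f q.1 * g q.2) = nsq f * nsq g := by
  simp only [nsq, Complex.normSq_mul, Fintype.sum_prod_type]
  rw [Finset.sum_mul_sum]

lemma nsq_star {γ : Type*} [Fintype γ] (f : γ → ℂ) : nsq (fun x => star (f x)) = nsq f := by
  simp only [nsq]
  exact Finset.sum_congr rfl fun x _ => by
    rw [show star (f x) = (starRingEnd ℂ) (f x) from rfl, Complex.normSq_conj]

lemma nsq_tensor_star {γ δ : Type*} [Fintype γ] [Fintype δ] (f : γ → ℂ) (g : δ → ℂ) :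
    nsq (fun q : γ × δ => f q.1 * star (g q.2)) = nsq f * nsq g := by
  have h := nsq_tensor f (fun x => star (g x))
  rw [nsq_star] at h
  exact h

lemma pure_ptrans_le {Y : Matrix (Fin m × Fin n) (Fin m × Fin n) ℂ} (hY : IsContr Y)
    (ψ : Fin m × Fin n → ℂ) (hψ : ∑ x, Complex.normSq (ψ x) = 1) :
    ((Y * ptrans (Matrix.vecMulVec ψ (fun x => star (ψ x)))).trace).re
      ≤ 1 + Real.sqrt ((m : ℝ) * ((m : ℝ) - 1) / 2) * pureConcurrence ψ := by
  classical
  set hA := reducedA_posSemidef ψ with hhA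
  set μ : Fin m → ℝ := hA.1.eigenvalues with hμ
  have hμ0 : ∀ a, 0 ≤ μ a := hA.eigenvalues_nonneg
  set u : Fin m → Fin m → ℂ := fun a => evec hA.1 a with hu
  set w : Fin m → Fin n → ℂ := fun a => fun l => ∑ i, star (ψ (i, l)) * u a i with hw
  have hKID : ∀ i l, ∑ a, u a i * star (w a l) = ψ (i, l) := by
    intro i l
    have step : ∀ a, u a i * star (w a l) = ∑ p, ψ (p, l) * (u a i * star (u a p)) := by
      intro a
      rw [hw]
      simp only [star_sum, star_mul', star_star, Finset.mul_sum]
      exact Finset.sum_congr rfl fun p _ => by ring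
    rw [Finset.sum_congr rfl fun a _ => step a, Finset.sum_comm]
    have step2 : ∀ p, ∑ a, ψ (p, l) * (u a i * star (u a p))
        = ψ (p, l) * (if i = p then 1 else 0) := by
      intro p
      rw [← Finset.mul_sum, hu, evec_complete hA.1 i p]
    rw [Finset.sum_congr rfl fun p _ => step2 p]
    simp
  have hnw : ∀ a, nsq (w a) = μ a := by
    intro a
    have hC : ((nsq (w a) : ℝ) : ℂ) = ((μ a : ℝ) : ℂ) := by
      rw [← dot_star_self]
      have step1 : dotProduct (star (w a)) (w a)
          = dotProduct (star (u a)) ((reducedA ψ) *ᵥ (u a)) := by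
        simp only [hw]
        rw [dot_sum_sum (fun i l => star (ψ (i, l)) * u a i)
          (fun i l => star (ψ (i, l)) * u a i)]
        have hterm : ∀ i j, dotProduct (star (fun l => star (ψ (i, l)) * u a i))
            (fun l => star (ψ (j, l)) * u a j)
            = star (u a i) * ((reducedA ψ) i j * u a j) := by
          intro i j
          simp only [dotProduct, Pi.star_apply, star_mul', star_star, reducedA,
            Finset.sum_mul, Finset.mul_sum]
          exact Finset.sum_congr rfl fun l _ => by ring
        rw [Finset.sum_congr rfl fun i _ => Finset.sum_congr rfl fun j _ => hterm i j]
        simp only [dotProduct, Matrix.mulVec, Pi.star_apply, Finset.mul_sum]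
      rw [step1, hu, mulVec_evec hA.1, dotProduct_smul, dot_star_self, nsq_evec hA.1]
      simp [Complex.real_smul]; rfl
    exact_mod_cast hC
  have hnu : ∀ a, nsq (u a) = 1 := by
    intro a; rw [hu]; exact nsq_evec hA.1 a
  have hdecomp : ptrans (Matrix.vecMulVec ψ (fun x => star (ψ x)))
      = ∑ p : Fin m × Fin m,
          Matrix.vecMulVec (fun q : Fin m × Fin n => u p.1 q.1 * w p.2 q.2)
            (fun q : Fin m × Fin n => star (u p.2 q.1 * w p.1 q.2)) := by
    ext q r
    simp only [ptrans, Matrix.vecMulVec_apply, Matrix.sum_apply]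
    rw [← hKID q.1 r.2, ← hKID r.1 q.2, Fintype.sum_prod_type, star_sum, Finset.sum_mul_sum]
    refine Finset.sum_congr rfl fun a _ => Finset.sum_congr rfl fun b _ => ?_
    simp only [star_mul', star_star]
    ring
  have hbound := re_trace_mul_sum_le hY
      (fun p : Fin m × Fin m => fun q : Fin m × Fin n => u p.1 q.1 * w p.2 q.2)
      (fun p : Fin m × Fin m => fun q : Fin m × Fin n => u p.2 q.1 * w p.1 q.2)
      (fun p : Fin m × Fin m => Real.sqrt (μ p.1) * Real.sqrt (μ p.2))
      (by
        intro p
        rw [nsq_tensor, nsq_tensor, hnw, hnw, hnu, hnu, one_mul, one_mul]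
        exact le_of_eq (mul_comm _ _))
  rw [← hdecomp] at hbound
  have hsum : ∑ p : Fin m × Fin m, Real.sqrt (μ p.1) * Real.sqrt (μ p.2)
      = (∑ a, Real.sqrt (μ a)) ^ 2 := by
    rw [Fintype.sum_prod_type, sq, Finset.sum_mul_sum]
  calc ((Y * ptrans (Matrix.vecMulVec ψ (fun x => star (ψ x)))).trace).re
      ≤ ∑ p : Fin m × Fin m, Real.sqrt (μ p.1) * Real.sqrt (μ p.2) := hbound
    _ = (∑ a, Real.sqrt (μ a)) ^ 2 := hsum
    _ ≤ 1 + Real.sqrt ((m : ℝ) * ((m : ℝ) - 1) / 2)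
          * Real.sqrt (2 * (1 - ∑ i, (μ i) ^ 2)) :=
        schmidt_sq_le μ hμ0 (trace_reducedA ψ hψ)
    _ = 1 + Real.sqrt ((m : ℝ) * ((m : ℝ) - 1) / 2) * pureConcurrence ψ := by
        rw [pureConcurrence_eq ψ]

lemma pure_realign_le {Y : Matrix (Fin n × Fin n) (Fin m × Fin m) ℂ} (hY : IsContr Y)
    (ψ : Fin m × Fin n → ℂ) (hψ : ∑ x, Complex.normSq (ψ x) = 1) :
    ((Y * realign (Matrix.vecMulVec ψ (fun x => star (ψ x)))).trace).re
      ≤ 1 + Real.sqrt ((m : ℝ) * ((m : ℝ) - 1) / 2) * pureConcurrence ψ := by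
  classical
  set hA := reducedA_posSemidef ψ with hhA
  set μ : Fin m → ℝ := hA.1.eigenvalues with hμ
  have hμ0 : ∀ a, 0 ≤ μ a := hA.eigenvalues_nonneg
  set u : Fin m → Fin m → ℂ := fun a => evec hA.1 a with hu
  set w : Fin m → Fin n → ℂ := fun a => fun l => ∑ i, star (ψ (i, l)) * u a i with hw
  have hKID : ∀ i l, ∑ a, u a i * star (w a l) = ψ (i, l) := by
    intro i l
    have step : ∀ a, u a i * star (w a l) = ∑ p, ψ (p, l) * (u a i * star (u a p)) := by
      intro a
      rw [hw]
      simp only [star_sum, star_mul', star_star, Finset.mul_sum]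
      exact Finset.sum_congr rfl fun p _ => by ring
    rw [Finset.sum_congr rfl fun a _ => step a, Finset.sum_comm]
    have step2 : ∀ p, ∑ a, ψ (p, l) * (u a i * star (u a p))
        = ψ (p, l) * (if i = p then 1 else 0) := by
      intro p
      rw [← Finset.mul_sum, hu, evec_complete hA.1 i p]
    rw [Finset.sum_congr rfl fun p _ => step2 p]
    simp
  have hnw : ∀ a, nsq (w a) = μ a := by
    intro a
    have hC : ((nsq (w a) : ℝ) : ℂ) = ((μ a : ℝ) : ℂ) := by
      rw [← dot_star_self]
      have step1 : dotProduct (star (w a)) (w a)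
          = dotProduct (star (u a)) ((reducedA ψ) *ᵥ (u a)) := by
        simp only [hw]
        rw [dot_sum_sum (fun i l => star (ψ (i, l)) * u a i)
          (fun i l => star (ψ (i, l)) * u a i)]
        have hterm : ∀ i j, dotProduct (star (fun l => star (ψ (i, l)) * u a i))
            (fun l => star (ψ (j, l)) * u a j)
            = star (u a i) * ((reducedA ψ) i j * u a j) := by
          intro i j
          simp only [dotProduct, Pi.star_apply, star_mul', star_star, reducedA,
            Finset.sum_mul, Finset.mul_sum]
          exact Finset.sum_congr rfl fun l _ => by ring
        rw [Finset.sum_congr rfl fun i _ => Finset.sum_congr rfl fun j _ => hterm i j]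
        simp only [dotProduct, Matrix.mulVec, Pi.star_apply, Finset.mul_sum]
      rw [step1, hu, mulVec_evec hA.1, dotProduct_smul, dot_star_self, nsq_evec hA.1]
      simp [Complex.real_smul]; rfl
    exact_mod_cast hC
  have hnu : ∀ a, nsq (u a) = 1 := by
    intro a; rw [hu]; exact nsq_evec hA.1 a
  have hdecomp : realign (Matrix.vecMulVec ψ (fun x => star (ψ x)))
      = ∑ p : Fin m × Fin m,
          Matrix.vecMulVec (fun q : Fin m × Fin m => u p.1 q.1 * star (u p.2 q.2))
            (fun q : Fin n × Fin n => star (w p.1 q.1 * star (w p.2 q.2))) := by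
    ext q r
    simp only [realign, Matrix.vecMulVec_apply, Matrix.sum_apply]
    rw [← hKID q.1 r.1, ← hKID q.2 r.2, Fintype.sum_prod_type, star_sum, Finset.sum_mul_sum]
    refine Finset.sum_congr rfl fun a _ => Finset.sum_congr rfl fun b _ => ?_
    simp only [star_mul', star_star]
    ring
  have hbound := re_trace_mul_sum_le hY
      (fun p : Fin m × Fin m => fun q : Fin m × Fin m => u p.1 q.1 * star (u p.2 q.2))
      (fun p : Fin m × Fin m => fun q : Fin n × Fin n => w p.1 q.1 * star (w p.2 q.2))
      (fun p : Fin m × Fin m => Real.sqrt (μ p.1) * Real.sqrt (μ p.2))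
      (by
        intro p
        rw [nsq_tensor_star, nsq_tensor_star, hnw, hnw, hnu, hnu, one_mul,
          Real.sqrt_one, one_mul, Real.sqrt_mul (hμ0 _)]
        )
  rw [← hdecomp] at hbound
  have hsum : ∑ p : Fin m × Fin m, Real.sqrt (μ p.1) * Real.sqrt (μ p.2)
      = (∑ a, Real.sqrt (μ a)) ^ 2 := by
    rw [Fintype.sum_prod_type, sq, Finset.sum_mul_sum]
  calc ((Y * realign (Matrix.vecMulVec ψ (fun x => star (ψ x)))).trace).re
      ≤ ∑ p : Fin m × Fin m, Real.sqrt (μ p.1) * Real.sqrt (μ p.2) := hbound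
    _ = (∑ a, Real.sqrt (μ a)) ^ 2 := hsum
    _ ≤ 1 + Real.sqrt ((m : ℝ) * ((m : ℝ) - 1) / 2)
          * Real.sqrt (2 * (1 - ∑ i, (μ i) ^ 2)) :=
        schmidt_sq_le μ hμ0 (trace_reducedA ψ hψ)
    _ = 1 + Real.sqrt ((m : ℝ) * ((m : ℝ) - 1) / 2) * pureConcurrence ψ := by
        rw [pureConcurrence_eq ψ]

end Pure

section Main

variable {m n : ℕ}

lemma ensemble_ptrans_le {s : ℕ} (p : Fin s → ℝ) (ψ : Fin s → (Fin m × Fin n → ℂ))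
    (h0 : ∀ i, 0 ≤ p i) (h1 : ∑ i, p i = 1)
    (hunit : ∀ i, ∑ x, Complex.normSq (ψ i x) = 1)
    {ρ : Matrix (Fin m × Fin n) (Fin m × Fin n) ℂ}
    (hρ : ρ = ∑ i, (p i : ℂ) • Matrix.vecMulVec (ψ i) (fun x => star (ψ i x))) :
    Real.sqrt (Real.sqrt (2 * ((((ptrans ρ)ᴴ * ptrans ρ).trace.re) ^ 2
        - (((ptrans ρ)ᴴ * ptrans ρ) ^ 2).trace.re))
      + ((ptrans ρ)ᴴ * ptrans ρ).trace.re)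
      ≤ 1 + Real.sqrt ((m : ℝ) * ((m : ℝ) - 1) / 2)
          * ∑ i, p i * pureConcurrence (ψ i) := by
  obtain ⟨Y, hY, hmom⟩ := moment_contraction (ptrans ρ)
  refine hmom.trans ?_
  have hlin : ptrans ρ
      = ∑ i, (p i : ℂ) • ptrans (Matrix.vecMulVec (ψ i) (fun x => star (ψ i x))) := by
    rw [hρ]
    ext q r
    simp [ptrans, Matrix.sum_apply, Matrix.smul_apply]
  have hre : ((Y * ptrans ρ).trace).re
      = ∑ i, p i * ((Y * ptrans (Matrix.vecMulVec (ψ i) (fun x => star (ψ i x)))).trace).re := by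
    rw [hlin, Matrix.mul_sum, Matrix.trace_sum, Complex.re_sum]
    refine Finset.sum_congr rfl fun i _ => ?_
    rw [Matrix.mul_smul, Matrix.trace_smul, smul_eq_mul]
    simp [Complex.mul_re]
  rw [hre]
  calc ∑ i, p i * ((Y * ptrans (Matrix.vecMulVec (ψ i) (fun x => star (ψ i x)))).trace).re
      ≤ ∑ i, p i * (1 + Real.sqrt ((m : ℝ) * ((m : ℝ) - 1) / 2) * pureConcurrence (ψ i)) :=
        Finset.sum_le_sum fun i _ =>
          mul_le_mul_of_nonneg_left (pure_ptrans_le hY (ψ i) (hunit i)) (h0 i)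
    _ = ∑ i, p i + ∑ i, p i * (Real.sqrt ((m : ℝ) * ((m : ℝ) - 1) / 2) * pureConcurrence (ψ i)) := by
        simp only [mul_add, mul_one]
        exact Finset.sum_add_distrib
    _ = 1 + Real.sqrt ((m : ℝ) * ((m : ℝ) - 1) / 2) * ∑ i, p i * pureConcurrence (ψ i) := by
        rw [h1]
        congr 1
        rw [Finset.mul_sum]
        exact Finset.sum_congr rfl fun i _ => by ring

lemma ensemble_realign_le {s : ℕ} (p : Fin s → ℝ) (ψ : Fin s → (Fin m × Fin n → ℂ))
    (h0 : ∀ i, 0 ≤ p i) (h1 : ∑ i, p i = 1)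
    (hunit : ∀ i, ∑ x, Complex.normSq (ψ i x) = 1)
    {ρ : Matrix (Fin m × Fin n) (Fin m × Fin n) ℂ}
    (hρ : ρ = ∑ i, (p i : ℂ) • Matrix.vecMulVec (ψ i) (fun x => star (ψ i x))) :
    Real.sqrt (Real.sqrt (2 * ((((realign ρ)ᴴ * realign ρ).trace.re) ^ 2
        - (((realign ρ)ᴴ * realign ρ) ^ 2).trace.re))
      + ((realign ρ)ᴴ * realign ρ).trace.re)
      ≤ 1 + Real.sqrt ((m : ℝ) * ((m : ℝ) - 1) / 2)
          * ∑ i, p i * pureConcurrence (ψ i) := by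
  obtain ⟨Y, hY, hmom⟩ := moment_contraction (realign ρ)
  refine hmom.trans ?_
  have hlin : realign ρ
      = ∑ i, (p i : ℂ) • realign (Matrix.vecMulVec (ψ i) (fun x => star (ψ i x))) := by
    rw [hρ]
    ext q r
    simp [realign, Matrix.sum_apply, Matrix.smul_apply]
  have hre : ((Y * realign ρ).trace).re
      = ∑ i, p i * ((Y * realign (Matrix.vecMulVec (ψ i) (fun x => star (ψ i x)))).trace).re := by
    rw [hlin, Matrix.mul_sum, Matrix.trace_sum, Complex.re_sum]
    refine Finset.sum_congr rfl fun i _ => ?_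
    rw [Matrix.mul_smul, Matrix.trace_smul, smul_eq_mul]
    simp [Complex.mul_re]
  rw [hre]
  calc ∑ i, p i * ((Y * realign (Matrix.vecMulVec (ψ i) (fun x => star (ψ i x)))).trace).re
      ≤ ∑ i, p i * (1 + Real.sqrt ((m : ℝ) * ((m : ℝ) - 1) / 2) * pureConcurrence (ψ i)) :=
        Finset.sum_le_sum fun i _ =>
          mul_le_mul_of_nonneg_left (pure_realign_le hY (ψ i) (hunit i)) (h0 i)
    _ = ∑ i, p i + ∑ i, p i * (Real.sqrt ((m : ℝ) * ((m : ℝ) - 1) / 2) * pureConcurrence (ψ i)) := by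
        simp only [mul_add, mul_one]
        exact Finset.sum_add_distrib
    _ = 1 + Real.sqrt ((m : ℝ) * ((m : ℝ) - 1) / 2) * ∑ i, p i * pureConcurrence (ψ i) := by
        rw [h1]
        congr 1
        rw [Finset.mul_sum]
        exact Finset.sum_congr rfl fun i _ => by ring

lemma ensemble_nonempty (ρ : Matrix (Fin m × Fin n) (Fin m × Fin n) ℂ)
    (hρ : ρ.PosSemidef) (htr : ρ.trace = 1) :
    ∃ (c : ℝ), ∃ (s : ℕ) (p : Fin s → ℝ) (ψ : Fin s → (Fin m × Fin n → ℂ)),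
      (∀ i, 0 ≤ p i) ∧ (∑ i, p i = 1) ∧
      (∀ i, ∑ x, Complex.normSq (ψ i x) = 1) ∧
      ρ = ∑ i, (p i : ℂ) • Matrix.vecMulVec (ψ i) (fun x => star (ψ i x)) ∧
      c = ∑ i, p i * pureConcurrence (ψ i) := by
  classical
  set e : Fin (m * n) ≃ Fin m × Fin n := finProdFinEquiv.symm with he
  set lam : Fin m × Fin n → ℝ := hρ.1.eigenvalues with hlam
  set u : Fin m × Fin n → (Fin m × Fin n → ℂ) := fun j => evec hρ.1 j with hu
  have hsum1 : ∑ j, lam j = 1 := by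
    have h := trace_hermitian hρ.1
    rw [htr] at h
    exact_mod_cast h.symm
  have hP : ρ = ∑ j : Fin m × Fin n,
      ((lam j : ℝ) : ℂ) • Matrix.vecMulVec (u j) (fun x => star (u j x)) := by
    ext q r
    rw [expand_matrix hρ.1 ρ q r]
    simp only [Matrix.sum_apply, Matrix.smul_apply, Matrix.vecMulVec_apply]
    refine Finset.sum_congr rfl fun j _ => ?_
    rw [hu, mulVec_evec hρ.1]
    simp only [Pi.smul_apply, Complex.real_smul, smul_eq_mul]
    ring
  refine ⟨∑ i : Fin (m * n), lam (e i) * pureConcurrence (u (e i)),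
    m * n, fun i => lam (e i), fun i => u (e i), fun i => hρ.eigenvalues_nonneg (e i), ?_, ?_, ?_, rfl⟩
  · rw [Equiv.sum_comp e lam]
    exact hsum1
  · intro i
    exact nsq_evec hρ.1 (e i)
  · rw [hP]
    exact (Equiv.sum_comp e
      (fun j => ((lam j : ℝ) : ℂ) • Matrix.vecMulVec (u j) (fun x => star (u j x)))).symm

end Main

end ConcAux

/-- Theorem 3: experimentally measurable lower bound of the concurrence in
terms of the first two PT moments and realignment moments. -/
theorem concurrence_moment_lower_bound (m n : ℕ) (hm : 2 ≤ m) (hmn : m ≤ n)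
    (ρ : Matrix (Fin m × Fin n) (Fin m × Fin n) ℂ)
    (hρ : ρ.PosSemidef) (htr : ρ.trace = 1) :
    concurrence ρ ≥ Real.sqrt (2 / (m * (m - 1) : ℝ)) *
      max (max
        (Real.sqrt (Real.sqrt (2 * ((((ptrans ρ)ᴴ * ptrans ρ).trace.re) ^ 2
            - (((ptrans ρ)ᴴ * ptrans ρ) ^ 2).trace.re))
          + ((ptrans ρ)ᴴ * ptrans ρ).trace.re) - 1)
        (Real.sqrt (Real.sqrt (2 * ((((realign ρ)ᴴ * realign ρ).trace.re) ^ 2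
            - (((realign ρ)ᴴ * realign ρ) ^ 2).trace.re))
          + ((realign ρ)ᴴ * realign ρ).trace.re) - 1))
        0 := by
  classical
  have hm2 : (2 : ℝ) ≤ (m : ℝ) := by exact_mod_cast hm
  have hMpos : 0 < (m : ℝ) * ((m : ℝ) - 1) := by nlinarith
  have hKD : Real.sqrt (2 / ((m : ℝ) * ((m : ℝ) - 1)))
      * Real.sqrt ((m : ℝ) * ((m : ℝ) - 1) / 2) = 1 := by
    rw [← Real.sqrt_mul (le_of_lt (div_pos two_pos hMpos))]
    rw [show 2 / ((m : ℝ) * ((m : ℝ) - 1)) * ((m : ℝ) * ((m : ℝ) - 1) / 2) = 1 by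
      have h1 : (m : ℝ) - 1 ≠ 0 := by linarith
      field_simp]
    exact Real.sqrt_one
  rw [ge_iff_le]
  unfold concurrence
  obtain ⟨c0, hc0mem⟩ := ConcAux.ensemble_nonempty ρ hρ htr
  refine le_csInf ⟨c0, hc0mem⟩ ?_
  rintro b ⟨s, p, ψ, h0, h1, hunit, hsum, rfl⟩
  have hc0 : 0 ≤ ∑ i, p i * pureConcurrence (ψ i) :=
    Finset.sum_nonneg fun i _ => mul_nonneg (h0 i) (Real.sqrt_nonneg _)
  have hM1 := ConcAux.ensemble_ptrans_le p ψ h0 h1 hunit hsum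
  have hM2 := ConcAux.ensemble_realign_le p ψ h0 h1 hunit hsum
  have hDc : 0 ≤ Real.sqrt ((m : ℝ) * ((m : ℝ) - 1) / 2)
      * ∑ i, p i * pureConcurrence (ψ i) := mul_nonneg (Real.sqrt_nonneg _) hc0
  have hmax : max (max
        (Real.sqrt (Real.sqrt (2 * ((((ptrans ρ)ᴴ * ptrans ρ).trace.re) ^ 2
            - (((ptrans ρ)ᴴ * ptrans ρ) ^ 2).trace.re))
          + ((ptrans ρ)ᴴ * ptrans ρ).trace.re) - 1)
        (Real.sqrt (Real.sqrt (2 * ((((realign ρ)ᴴ * realign ρ).trace.re) ^ 2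
            - (((realign ρ)ᴴ * realign ρ) ^ 2).trace.re))
          + ((realign ρ)ᴴ * realign ρ).trace.re) - 1))
        0 ≤ Real.sqrt ((m : ℝ) * ((m : ℝ) - 1) / 2) * ∑ i, p i * pureConcurrence (ψ i) :=
    max_le (max_le (by linarith) (by linarith)) hDc
  calc Real.sqrt (2 / ((m : ℝ) * ((m : ℝ) - 1))) * _ ≤
      Real.sqrt (2 / ((m : ℝ) * ((m : ℝ) - 1)))
        * (Real.sqrt ((m : ℝ) * ((m : ℝ) - 1) / 2) * ∑ i, p i * pureConcurrence (ψ i)) :=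
        mul_le_mul_of_nonneg_left hmax (Real.sqrt_nonneg _)
    _ = (Real.sqrt (2 / ((m : ℝ) * ((m : ℝ) - 1)))
        * Real.sqrt ((m : ℝ) * ((m : ℝ) - 1) / 2)) * ∑ i, p i * pureConcurrence (ψ i) := by
        ring
    _ = ∑ i, p i * pureConcurrence (ψ i) := by rw [hKD, one_mul]
end

section
/- Lemma 1 (two-term case): Let A and B be n×n positive semidefinite complex matrices, let 0 ≤ p ≤ 1, and let k ≥ 1 be a natural number. Then Tr((p·A + (1−p)·B)^k) ≤ p·Tr(A^k) + (1−p)·Tr(B^k), where all traces are nonnegative real numbers. -/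
open ComplexOrder Matrix Finset

namespace TraceConvexAux

variable {n : ℕ}

lemma diag_entry_re (W : Matrix (Fin n) (Fin n) ℂ) (d : Fin n → ℝ) (i : Fin n) :
    ((W * diagonal (fun j => (d j : ℂ)) * Wᴴ) i i).re
      = ∑ j, Complex.normSq (W i j) * d j := by
  rw [Matrix.mul_apply, Complex.re_sum]
  refine Finset.sum_congr rfl fun j _ => ?_
  rw [Matrix.mul_diagonal, Matrix.conjTranspose_apply]
  have : W i j * (d j : ℂ) * star (W i j)
      = ((Complex.normSq (W i j) * d j : ℝ) : ℂ) := by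
    rw [show star (W i j) = (starRingEnd ℂ) (W i j) from rfl]
    push_cast
    rw [← Complex.mul_conj]
    ring
  rw [this, Complex.ofReal_re]

lemma sum_normSq_row (W : Matrix (Fin n) (Fin n) ℂ) (hW : W * Wᴴ = 1) (i : Fin n) :
    ∑ j, Complex.normSq (W i j) = 1 := by
  have h := congrArg (fun M : Matrix (Fin n) (Fin n) ℂ => (M i i).re) hW
  simp only [Matrix.mul_apply, Matrix.conjTranspose_apply, Matrix.one_apply_eq] at h
  rw [Complex.re_sum] at h
  simpa [Complex.mul_conj] using h

lemma core (W : Matrix (Fin n) (Fin n) ℂ) (hW : W * Wᴴ = 1)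
    (d : Fin n → ℝ) (hd : ∀ j, 0 ≤ d j) (k : ℕ) (i : Fin n) :
    ((W * diagonal (fun j => (d j : ℂ)) * Wᴴ) i i).re ^ k
      ≤ ((W * diagonal (fun j => ((d j ^ k : ℝ) : ℂ)) * Wᴴ) i i).re := by
  rw [diag_entry_re, diag_entry_re (d := fun j => d j ^ k)]
  exact Real.pow_arith_mean_le_arith_mean_pow Finset.univ
    (fun j => Complex.normSq (W i j)) d
    (fun j _ => Complex.normSq_nonneg _)
    (by simpa using sum_normSq_row W hW i)
    (fun j _ => hd j) k

lemma conj_pow (V C : Matrix (Fin n) (Fin n) ℂ) (h1 : V * Vᴴ = 1) (h2 : Vᴴ * V = 1)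
    (k : ℕ) : (V * C * Vᴴ) ^ k = V * C ^ k * Vᴴ := by
  induction k with
  | zero => simpa using h1.symm
  | succ k ih =>
      rw [pow_succ, ih, pow_succ]
      calc V * C ^ k * Vᴴ * (V * C * Vᴴ)
          = V * C ^ k * (Vᴴ * V) * C * Vᴴ := by noncomm_ring
        _ = V * (C ^ k * C) * Vᴴ := by rw [h2]; noncomm_ring

lemma trace_conj (U X : Matrix (Fin n) (Fin n) ℂ) (h1 : U * Uᴴ = 1) :
    (Uᴴ * X * U).trace = X.trace := by
  rw [Matrix.trace_mul_cycle, h1, Matrix.one_mul]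

lemma diag_re_nonneg {P : Matrix (Fin n) (Fin n) ℂ} (hP : P.PosSemidef) (i : Fin n) :
    0 ≤ (P i i).re := by
  have h := hP.re_dotProduct_nonneg (Pi.single i 1)
  simpa [dotProduct, mulVec, Pi.single_apply, Finset.sum_ite_eq] using h

lemma psd_smul {A : Matrix (Fin n) (Fin n) ℂ} (hA : A.PosSemidef) {c : ℝ} (hc : 0 ≤ c) :
    ((c : ℂ) • A).PosSemidef := by
  refine ⟨?_, fun x => ?_⟩
  · unfold Matrix.IsHermitian
    rw [Matrix.conjTranspose_smul, hA.1]
    congr 1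
    simp
  · exact (hA.smul (show (0:ℂ) ≤ (c : ℂ) by exact_mod_cast hc)).2 x

lemma jensen {X : Matrix (Fin n) (Fin n) ℂ} (hX : X.PosSemidef)
    (U : Matrix (Fin n) (Fin n) ℂ) (hU1 : U * Uᴴ = 1) (hU2 : Uᴴ * U = 1)
    (k : ℕ) (i : Fin n) :
    ((Uᴴ * X * U) i i).re ^ k ≤ ((Uᴴ * X ^ k * U) i i).re := by
  classical
  have hH := hX.1
  set V : Matrix (Fin n) (Fin n) ℂ := (hH.eigenvectorUnitary : Matrix (Fin n) (Fin n) ℂ) with hVdef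
  set d : Fin n → ℝ := hH.eigenvalues with hddef
  have hV1 : V * Vᴴ = 1 := by
    have := (Matrix.mem_unitaryGroup_iff).mp hH.eigenvectorUnitary.2
    simpa [Matrix.star_eq_conjTranspose] using this
  have hV2 : Vᴴ * V = 1 := by
    have := (Matrix.mem_unitaryGroup_iff').mp hH.eigenvectorUnitary.2
    simpa [Matrix.star_eq_conjTranspose] using this
  have hd : ∀ j, 0 ≤ d j := fun j => hX.eigenvalues_nonneg j
  have hspec : X = V * diagonal (fun j => (d j : ℂ)) * Vᴴ := by
    have := hH.spectral_theorem
    simpa [Matrix.star_eq_conjTranspose, Function.comp_def] using this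
  set W := Uᴴ * V with hWdef
  have hWc : Wᴴ = Vᴴ * U := by
    rw [hWdef, Matrix.conjTranspose_mul, Matrix.conjTranspose_conjTranspose]
  have hW : W * Wᴴ = 1 := by
    rw [hWc, hWdef]
    calc Uᴴ * V * (Vᴴ * U) = Uᴴ * (V * Vᴴ) * U := by noncomm_ring
      _ = Uᴴ * U := by rw [hV1, Matrix.mul_one]
      _ = 1 := hU2
  have h1 : Uᴴ * X * U = W * diagonal (fun j => (d j : ℂ)) * Wᴴ := by
    rw [hWc, hWdef, hspec]
    noncomm_ring
  have h2 : Uᴴ * X ^ k * U = W * diagonal (fun j => ((d j ^ k : ℝ) : ℂ)) * Wᴴ := by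
    have hXk : X ^ k = V * diagonal (fun j => ((d j ^ k : ℝ) : ℂ)) * Vᴴ := by
      rw [hspec, conj_pow V _ hV1 hV2, Matrix.diagonal_pow]
      congr 1
      congr 1
      funext j
      push_cast
      rfl
    rw [hXk, hWc, hWdef]
    noncomm_ring
  rw [h1, h2]
  exact core W hW d hd k i

end TraceConvexAux




open ComplexOrder Matrix

/-- Lemma 1 (two-term case): for positive semidefinite complex matrices `A`,
`B`, any `0 ≤ p ≤ 1` and any `k ≥ 1`,
`Tr((p·A + (1−p)·B)^k) ≤ p·Tr(A^k) + (1−p)·Tr(B^k)`. -/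
theorem trace_pow_convex_two (n : ℕ) (A B : Matrix (Fin n) (Fin n) ℂ)
    (hA : A.PosSemidef) (hB : B.PosSemidef)
    (p : ℝ) (hp0 : 0 ≤ p) (hp1 : p ≤ 1) (k : ℕ) (hk : 1 ≤ k) :
    ((((p : ℂ) • A + ((1 - p : ℝ) : ℂ) • B) ^ k).trace).re ≤
      p * ((A ^ k).trace).re + (1 - p) * ((B ^ k).trace).re := by
  classical
  set M : Matrix (Fin n) (Fin n) ℂ := (p : ℂ) • A + ((1 - p : ℝ) : ℂ) • B with hMdef
  have hq0 : (0:ℝ) ≤ 1 - p := by linarith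
  have hM : M.PosSemidef := (TraceConvexAux.psd_smul hA hp0).add (TraceConvexAux.psd_smul hB hq0)
  set U : Matrix (Fin n) (Fin n) ℂ := (hM.1.eigenvectorUnitary : Matrix (Fin n) (Fin n) ℂ) with hUdef
  set μ : Fin n → ℝ := hM.1.eigenvalues with hmudef
  have hU1 : U * Uᴴ = 1 := by
    have := (Matrix.mem_unitaryGroup_iff).mp hM.1.eigenvectorUnitary.2
    simpa [Matrix.star_eq_conjTranspose] using this
  have hU2 : Uᴴ * U = 1 := by
    have := (Matrix.mem_unitaryGroup_iff').mp hM.1.eigenvectorUnitary.2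
    simpa [Matrix.star_eq_conjTranspose] using this
  have hdiag : Uᴴ * M * U = diagonal (fun j => (μ j : ℂ)) := by
    have := hM.1.conjStarAlgAut_star_eigenvectorUnitary
    simpa [Matrix.star_eq_conjTranspose, Function.comp_def] using this
  have hspecM : M = U * diagonal (fun j => (μ j : ℂ)) * Uᴴ := by
    have := hM.1.spectral_theorem
    simpa [Matrix.star_eq_conjTranspose, Function.comp_def] using this
  -- trace of M^k equals sum of μ_i^k
  have hMk : M ^ k = U * diagonal (fun j => ((μ j ^ k : ℝ) : ℂ)) * Uᴴ := by
    rw [hspecM, TraceConvexAux.conj_pow U _ hU1 hU2, Matrix.diagonal_pow]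
    congr 2
    funext j
    push_cast
    rfl
  have htraceM : ((M ^ k).trace).re = ∑ i, μ i ^ k := by
    rw [hMk, Matrix.trace_mul_cycle, hU2, Matrix.one_mul,
      Matrix.trace_diagonal, Complex.re_sum]
    simp [← Complex.ofReal_pow]
  -- diag entries
  set a : Fin n → ℝ := fun i => ((Uᴴ * A * U) i i).re with hadef
  set b : Fin n → ℝ := fun i => ((Uᴴ * B * U) i i).re with hbdef
  have ha0 : ∀ i, 0 ≤ a i := fun i =>
    TraceConvexAux.diag_re_nonneg (hA.conjTranspose_mul_mul_same U) i
  have hb0 : ∀ i, 0 ≤ b i := fun i =>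
    TraceConvexAux.diag_re_nonneg (hB.conjTranspose_mul_mul_same U) i
  have hmu : ∀ i, μ i = p * a i + (1 - p) * b i := by
    intro i
    have h := congrArg (fun X : Matrix (Fin n) (Fin n) ℂ => (X i i).re) hdiag
    simp only [Matrix.diagonal_apply_eq, Complex.ofReal_re] at h
    rw [← h, hMdef]
    simp only [Matrix.mul_add, Matrix.add_mul, Matrix.mul_smul, Matrix.smul_mul,
      Matrix.add_apply, Matrix.smul_apply, Complex.add_re, smul_eq_mul]
    rw [Complex.re_ofReal_mul, Complex.re_ofReal_mul]
  -- trace identity for A, B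
  have htr : ∀ X : Matrix (Fin n) (Fin n) ℂ, (X.trace).re = ∑ i, ((Uᴴ * X * U) i i).re := by
    intro X
    rw [← TraceConvexAux.trace_conj U X hU1, Matrix.trace, Complex.re_sum]
    rfl
  rw [htraceM, htr (A ^ k), htr (B ^ k), Finset.mul_sum, Finset.mul_sum,
    ← Finset.sum_add_distrib]
  refine Finset.sum_le_sum fun i _ => ?_
  have hconv : μ i ^ k ≤ p * a i ^ k + (1 - p) * b i ^ k := by
    rw [hmu i]
    have := (convexOn_pow k).2 (Set.mem_Ici.mpr (ha0 i)) (Set.mem_Ici.mpr (hb0 i))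
      hp0 hq0 (by ring)
    simpa using this
  refine hconv.trans ?_
  have hja := TraceConvexAux.jensen hA U hU1 hU2 k i
  have hjb := TraceConvexAux.jensen hB U hU1 hU2 k i
  have : a i ^ k ≤ ((Uᴴ * A ^ k * U) i i).re := hja
  nlinarith [hjb, mul_le_mul_of_nonneg_left this hp0,
    mul_le_mul_of_nonneg_left hjb hq0]
end

section
/- Lemma 1: Let ρ₁, …, ρ_s be n×n positive semidefinite complex matrices, let p₁, …, p_s be nonnegative reals with ∑_i p_i = 1, and let k ≥ 1 be a natural number. Then Tr((∑_i p_i ρ_i)^k) ≤ ∑_i p_i Tr(ρ_i^k), where all traces are nonnegative real numbers. -/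
open ComplexOrder Matrix

section TracePowAux

variable {n : ℕ}

private lemma conj_pow_aux (U M : Matrix (Fin n) (Fin n) ℂ) (h1 : U * star U = 1)
    (h2 : star U * U = 1) (k : ℕ) :
    (star U * M * U) ^ k = star U * M ^ k * U := by
  induction k with
  | zero => simpa using h2.symm
  | succ k ih =>
      rw [pow_succ, pow_succ, ih]
      simp only [Matrix.mul_assoc]
      rw [← Matrix.mul_assoc U (star U) (M * U), h1, Matrix.one_mul]

private lemma smul_psd_aux {c : ℝ} (hc : 0 ≤ c) {M : Matrix (Fin n) (Fin n) ℂ}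
    (hM : M.PosSemidef) : ((c : ℂ) • M).PosSemidef := by
  refine posSemidef_iff_dotProduct_mulVec.mpr ⟨?_, fun x => ?_⟩
  · show ((c : ℂ) • M)ᴴ = _
    rw [conjTranspose_smul, hM.1.eq]
    congr 1
    simp [Complex.star_def, Complex.conj_ofReal]
  · rw [smul_mulVec, dotProduct_smul, smul_eq_mul]
    exact mul_nonneg (by exact_mod_cast hc) (hM.dotProduct_mulVec_nonneg x)

/-- For a PSD matrix `B`, `∑ⱼ (Bⱼⱼ)^k ≤ Tr(B^k)` (real parts). -/
private lemma diag_pow_le_trace_pow {B : Matrix (Fin n) (Fin n) ℂ}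
    (hB : B.PosSemidef) (k : ℕ) :
    ∑ j, ((B j j).re) ^ k ≤ ((B ^ k).trace).re := by
  set U : Matrix (Fin n) (Fin n) ℂ := (hB.1.eigenvectorUnitary : Matrix (Fin n) (Fin n) ℂ)
    with hUdef
  have hU1 : U * star U = 1 := mem_unitaryGroup_iff.mp hB.1.eigenvectorUnitary.2
  have hU2 : star U * U = 1 := mem_unitaryGroup_iff'.mp hB.1.eigenvectorUnitary.2
  set μ : Fin n → ℝ := hB.1.eigenvalues with hμdef
  have hμ : ∀ m, 0 ≤ μ m := hB.eigenvalues_nonneg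
  set D : Matrix (Fin n) (Fin n) ℂ := diagonal (fun m => (μ m : ℂ)) with hDdef
  have hspec : B = U * D * star U := by
    have h := hB.1.spectral_theorem
    rw [Unitary.conjStarAlgAut_apply] at h
    exact h
  have hpow : B ^ k = U * D ^ k * star U := by
    have h := conj_pow_aux (star U) D (by rwa [star_star]) (by rwa [star_star]) k
    rw [star_star] at h
    rw [hspec, h]
  -- trace of B^k
  have htr : ((B ^ k).trace).re = ∑ m, (μ m) ^ k := by
    rw [hpow, Matrix.trace_mul_cycle, hU2, Matrix.one_mul, hDdef, Matrix.diagonal_pow,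
      Matrix.trace_diagonal]
    simp [← Complex.ofReal_pow]
  -- diagonal entries of B
  set w : Fin n → Fin n → ℝ := fun j m => Complex.normSq (U j m) with hwdef
  have hw0 : ∀ j m, 0 ≤ w j m := fun j m => Complex.normSq_nonneg _
  have hrow : ∀ j, ∑ m, w j m = 1 := by
    intro j
    have h := congrFun (congrFun hU1 j) j
    simp only [Matrix.mul_apply, Matrix.one_apply_eq, Matrix.star_apply] at h
    have : ((∑ m, U j m * star (U j m)) : ℂ).re = (1 : ℂ).re := by rw [h]
    simpa [Complex.mul_conj, hwdef, ← Complex.ofReal_sum] using this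
  have hcol : ∀ m, ∑ j, w j m = 1 := by
    intro m
    have h := congrFun (congrFun hU2 m) m
    simp only [Matrix.mul_apply, Matrix.one_apply_eq, Matrix.star_apply] at h
    have : ((∑ j, star (U j m) * U j m) : ℂ).re = (1 : ℂ).re := by rw [h]
    simpa [mul_comm, Complex.mul_conj, hwdef, ← Complex.ofReal_sum] using this
  have hdiag : ∀ j, (B j j).re = ∑ m, w j m * μ m := by
    intro j
    rw [hspec]
    simp only [Matrix.mul_apply, Matrix.mul_diagonal, Matrix.star_apply, hDdef,
      Matrix.diagonal_apply]
    rw [Complex.re_sum]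
    refine Finset.sum_congr rfl fun m _ => ?_
    have : U j m * (μ m : ℂ) * star (U j m) = ((w j m * μ m : ℝ) : ℂ) := by
      rw [Complex.star_def, mul_comm (U j m) ((μ m : ℂ)), mul_assoc, Complex.mul_conj]
      push_cast
      ring
    rw [show (∑ x, U j x * (if x = m then (μ x : ℂ) else 0)) * star (U j m)
        = U j m * (μ m : ℂ) * star (U j m) by simp [Finset.sum_ite_eq'], this,
      Complex.ofReal_re]
  -- Jensen per row
  have jensen : ∀ j, ((B j j).re) ^ k ≤ ∑ m, w j m * (μ m) ^ k := by
    intro j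
    rw [hdiag j]
    have h := (convexOn_pow (𝕜 := ℝ) k).map_sum_le (t := Finset.univ) (w := w j) (p := μ)
      (fun m _ => hw0 j m) (hrow j) (fun m _ => hμ m)
    simpa [smul_eq_mul] using h
  calc ∑ j, ((B j j).re) ^ k ≤ ∑ j, ∑ m, w j m * (μ m) ^ k :=
        Finset.sum_le_sum fun j _ => jensen j
    _ = ∑ m, (∑ j, w j m) * (μ m) ^ k := by
        rw [Finset.sum_comm]
        simp [Finset.sum_mul]
    _ = ((B ^ k).trace).re := by simp [hcol, htr]

end TracePowAux

/-- Lemma 1: for positive semidefinite complex matrices `ρ₁, …, ρ_s`,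
nonnegative weights summing to one, and any `k ≥ 1`,
`Tr((∑ pᵢ ρᵢ)^k) ≤ ∑ pᵢ Tr(ρᵢ^k)`. -/
theorem trace_pow_convex (n s : ℕ) (ρ : Fin s → Matrix (Fin n) (Fin n) ℂ)
    (hρ : ∀ i, (ρ i).PosSemidef)
    (p : Fin s → ℝ) (hp : ∀ i, 0 ≤ p i) (hps : ∑ i, p i = 1)
    (k : ℕ) (hk : 1 ≤ k) :
    (((∑ i, (p i : ℂ) • ρ i) ^ k).trace).re ≤
      ∑ i, p i * (((ρ i) ^ k).trace).re := by
  set A : Matrix (Fin n) (Fin n) ℂ := ∑ i, (p i : ℂ) • ρ i with hAdef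
  have hA : A.PosSemidef := by
    rw [hAdef]
    refine Finset.sum_induction _ _ (fun a b ha hb => ha.add hb) Matrix.PosSemidef.zero
      (fun i _ => smul_psd_aux (hp i) (hρ i))
  set U : Matrix (Fin n) (Fin n) ℂ := (hA.1.eigenvectorUnitary : Matrix (Fin n) (Fin n) ℂ)
  have hU1 : U * star U = 1 := mem_unitaryGroup_iff.mp hA.1.eigenvectorUnitary.2
  have hU2 : star U * U = 1 := mem_unitaryGroup_iff'.mp hA.1.eigenvectorUnitary.2
  set lam : Fin n → ℝ := hA.1.eigenvalues with hlamdef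
  have hlam : ∀ j, 0 ≤ lam j := hA.eigenvalues_nonneg
  -- conjugated matrices
  set B : Fin s → Matrix (Fin n) (Fin n) ℂ := fun i => star U * ρ i * U with hBdef
  have hBpsd : ∀ i, (B i).PosSemidef := fun i => by
    simpa [hBdef, Matrix.star_eq_conjTranspose] using
      (hρ i).conjTranspose_mul_mul_same U
  -- trace of B i ^ k equals trace of ρ i ^ k
  have hBtr : ∀ i, (((B i) ^ k).trace) = (((ρ i) ^ k).trace) := by
    intro i
    rw [hBdef]
    rw [conj_pow_aux U (ρ i) hU1 hU2 k, Matrix.trace_mul_cycle, hU1, Matrix.one_mul]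
  -- diagonalization of A
  have hdiagA : star U * A * U = diagonal (fun j => (lam j : ℂ)) := by
    have h := hA.1.conjStarAlgAut_star_eigenvectorUnitary
    simp only [Unitary.conjStarAlgAut_apply, Unitary.coe_star, star_star] at h
    exact h
  -- lam j as convex combination
  have hlc : ∀ j, lam j = ∑ i, p i * ((B i) j j).re := by
    intro j
    have hsum : star U * A * U = ∑ i, (p i : ℂ) • B i := by
      rw [hAdef]
      rw [Finset.mul_sum, Finset.sum_mul]
      refine Finset.sum_congr rfl fun i _ => ?_
      simp [hBdef, Matrix.mul_smul, Matrix.smul_mul]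
    have h := congrFun (congrFun (hdiagA.symm.trans hsum) j) j
    simp only [Matrix.diagonal_apply_eq, Matrix.sum_apply, Matrix.smul_apply,
      smul_eq_mul] at h
    have := congrArg Complex.re h
    simpa [Complex.re_sum] using this
  have hdiag_nonneg : ∀ i j, 0 ≤ ((B i) j j).re := by
    intro i j
    have h := (hBpsd i).dotProduct_mulVec_nonneg (Pi.single j 1)
    have hq : (star (Pi.single j 1) : Fin n → ℂ) ⬝ᵥ ((B i) *ᵥ Pi.single j 1) = (B i) j j := by
      simp [dotProduct, Matrix.mulVec, Pi.single_apply,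
        Finset.sum_ite_eq', apply_ite (star : ℂ → ℂ)]
    rw [hq] at h
    exact (Complex.le_def.mp h).1
  -- trace of A^k as sum of eigenvalue powers
  have hApow : A ^ k = U * (diagonal (fun j => (lam j : ℂ))) ^ k * star U := by
    have hspec : A = U * diagonal (fun j => (lam j : ℂ)) * star U := by
      rw [← hdiagA]
      simp only [← Matrix.mul_assoc]
      rw [hU1, Matrix.one_mul, Matrix.mul_assoc, hU1, Matrix.mul_one]
    have h := conj_pow_aux (star U) (diagonal (fun j => (lam j : ℂ)))
      (by rwa [star_star]) (by rwa [star_star]) k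
    rw [star_star] at h
    rw [hspec, h]
  have htrA : ((A ^ k).trace).re = ∑ j, (lam j) ^ k := by
    rw [hApow, Matrix.trace_mul_cycle, hU2, Matrix.one_mul, Matrix.diagonal_pow,
      Matrix.trace_diagonal]
    simp [← Complex.ofReal_pow]
  -- main chain
  rw [htrA]
  have step1 : ∀ j, (lam j) ^ k ≤ ∑ i, p i * (((B i) j j).re) ^ k := by
    intro j
    rw [hlc j]
    have h := (convexOn_pow (𝕜 := ℝ) k).map_sum_le (t := Finset.univ)
      (w := p) (p := fun i => ((B i) j j).re)
      (fun i _ => hp i) hps (fun i _ => hdiag_nonneg i j)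
    simpa [smul_eq_mul] using h
  calc ∑ j, (lam j) ^ k ≤ ∑ j, ∑ i, p i * (((B i) j j).re) ^ k :=
        Finset.sum_le_sum fun j _ => step1 j
    _ = ∑ i, p i * ∑ j, (((B i) j j).re) ^ k := by
        rw [Finset.sum_comm]
        simp [Finset.mul_sum]
    _ ≤ ∑ i, p i * (((B i) ^ k).trace).re :=
        Finset.sum_le_sum fun i _ =>
          mul_le_mul_of_nonneg_left (diag_pow_le_trace_pow (hBpsd i) k) (hp i)
    _ = ∑ i, p i * (((ρ i) ^ k).trace).re := by
        refine Finset.sum_congr rfl fun i _ => ?_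
        rw [hBtr i]
end
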